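/- arXiv:1004.1476 — 3 statements merged into one kernel-verified Lean document; each statement's English description precedes it below -/
import Mathlib

section
/- Let 1 ≤ q < 2. There exists a constant c > 0 depending only on q such that for every real Banach space V, every continuous path X : [0,1] → V of finite q-variation, and every finite partition P of [0,1], the piecewise linear approximation satisfies ‖π_P X‖_q ≤ c ‖X‖_q. -/
/-!
Let `D` be any partition of `[0, 1]`. A step `[D_j, D_{j+1}]` lying inside one interval
`[t_i, t_{i+1}]` of `P` moves `π_P X` by the fraction `μ_j = (D_{j+1} - D_j) / (t_{i+1} - t_i)` of
`X(t_{i+1}) - X(t_i)`. Since `q ≥ 1` we have `μ_j ^ q ≤ μ_j`, and the `μ_j` belonging to one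
interval of `P` add up to at most `1`, so these steps contribute at most the `q`-variation sum of
`X` along `P`. A step of `D` that crosses points of `P` is bounded by three increments of `X`: over
the first and the last interval of `P` it meets, and between them. Each of these three families
consists of non-overlapping intervals, so each sums to at most `‖X‖_q ^ q`. Altogether the
`q`-variation sum of `π_P X` along `D` is at most `(1 + 3 ^ q) ‖X‖_q ^ q ≤ 4 ^ q ‖X‖_q ^ q`.
-/

open scoped ENNReal

universe u

/-- A finite partition of the interval `[s,t]`: monotone points `pt 0 = s ≤ pt 1 ≤ ⋯ ≤ pt N = t`. -/
structure Subdivision (s t : ℝ) where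
  N : ℕ
  pt : ℕ → ℝ
  pos : 0 < N
  first : pt 0 = s
  last : pt N = t
  mono : ∀ i, i < N → pt i ≤ pt (i + 1)

/-- The mesh of a partition: the largest length of a subinterval. -/
noncomputable def Subdivision.mesh {s t : ℝ} (P : Subdivision s t) : ℝ :=
  (Finset.range P.N).sup' (Finset.nonempty_range_iff.mpr P.pos.ne')
    (fun i => P.pt (i + 1) - P.pt i)

/-- The `q`-variation norm of a path `X : [0,1] → V`, as a value in `[0,∞]`:
`sup_D (∑ ‖X(t_i) - X(t_{i-1})‖^q)^(1/q)` over all finite partitions `D` of `[0,1]`. -/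
noncomputable def qVar {V : Type u} [NormedAddCommGroup V] (q : ℝ) (X : ℝ → V) : ℝ≥0∞ :=
  ⨆ P : Subdivision 0 1,
    ENNReal.ofReal
      ((∑ i ∈ Finset.range P.N, ‖X (P.pt (i + 1)) - X (P.pt i)‖ ^ q) ^ (1 / q))

/-- `Y` is the piecewise linear approximation of the path `X` along the partition `P`:
`Y (pt i) = X (pt i)` and `Y` is affine on each subinterval `[pt i, pt (i+1)]`. -/
def IsPiecewiseLinearApprox {V : Type u} [NormedAddCommGroup V] [Module ℝ V]
    (P : Subdivision 0 1) (X Y : ℝ → V) : Prop :=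
  ∀ i, i < P.N → ∀ u, P.pt i ≤ u → u ≤ P.pt (i + 1) →
    Y u = X (P.pt i)
      + ((u - P.pt i) / (P.pt (i + 1) - P.pt i)) • (X (P.pt (i + 1)) - X (P.pt i))

open Finset

lemma sum_sub_le_of_forall_mem_Icc {w : ℕ → ℝ} {N : ℕ} (hw : ∀ j < N, w j ≤ w (j + 1))
    {J : Finset ℕ} (hJ : J ⊆ range N) {a b : ℝ} (hab : a ≤ b)
    (hJab : ∀ j ∈ J, a ≤ w j ∧ w (j + 1) ≤ b) :
    ∑ j ∈ J, (w (j + 1) - w j) ≤ b - a := by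
  -- telescope the increments of `w` clamped to `[a, b]`
  set c : ℝ → ℝ := fun x => max a (min x b)
  have hc : Monotone c := fun x y hxy => max_le_max le_rfl (min_le_min hxy le_rfl)
  calc ∑ j ∈ J, (w (j + 1) - w j) = ∑ j ∈ J, (c (w (j + 1)) - c (w j)) := by
        refine sum_congr rfl fun j hj => ?_
        obtain ⟨ha, hb⟩ := hJab j hj
        have hj' : w j ≤ w (j + 1) := hw j (mem_range.mp (hJ hj))
        simp only [c, min_eq_left hb, min_eq_left (hj'.trans hb), max_eq_right ha,
          max_eq_right (ha.trans hj')]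
    _ ≤ ∑ j ∈ range N, (c (w (j + 1)) - c (w j)) :=
        sum_le_sum_of_subset_of_nonneg hJ fun j hj _ =>
          sub_nonneg.mpr (hc (hw j (mem_range.mp hj)))
    _ = c (w N) - c (w 0) := sum_range_sub (fun j => c (w j)) N
    _ ≤ b - a := sub_le_sub (max_le hab (min_le_right _ _)) (le_max_left _ _)

lemma add_add_rpow_le {a b c q : ℝ} (ha : 0 ≤ a) (hb : 0 ≤ b) (hc : 0 ≤ c) (hq : 1 ≤ q) :
    (a + b + c) ^ q ≤ 3 ^ (q - 1) * (a ^ q + b ^ q + c ^ q) := by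
  have := Real.rpow_sum_le_const_mul_sum_rpow_of_nonneg (s := univ) (f := ![a, b, c]) hq
    (by simp [Fin.forall_fin_succ, ha, hb, hc])
  simpa [Fin.sum_univ_three, add_assoc] using this

namespace Subdivision

variable {s t : ℝ} (P : Subdivision s t) {V : Type*} [NormedAddCommGroup V] {q : ℝ}

lemma pt_le_pt {i j : ℕ} (hij : i ≤ j) (hj : j ≤ P.N) : P.pt i ≤ P.pt j := by
  induction j, hij using Nat.le_induction with
  | base => rfl
  | succ k _ ih => exact (ih (by omega)).trans (P.mono k (by omega))

lemma pt_mem_Icc {i : ℕ} (hi : i ≤ P.N) : P.pt i ∈ Set.Icc s t := by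
  constructor
  · simpa only [P.first] using P.pt_le_pt (Nat.zero_le i) hi
  · simpa only [P.last] using P.pt_le_pt hi le_rfl

noncomputable def variationSum (q : ℝ) (X : ℝ → V) : ℝ :=
  ∑ i ∈ range P.N, ‖X (P.pt (i + 1)) - X (P.pt i)‖ ^ q

lemma variationSum_nonneg (q : ℝ) (X : ℝ → V) : 0 ≤ P.variationSum q X :=
  sum_nonneg fun _ _ => by positivity

lemma sum_comp_le_variationSum (X : ℝ → V) {J : Finset ℕ} {g : ℕ → ℕ}
    (hg : ∀ j ∈ J, g j < P.N) (hinj : Set.InjOn g J) :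
    ∑ j ∈ J, ‖X (P.pt (g j + 1)) - X (P.pt (g j))‖ ^ q ≤ P.variationSum q X := by
  rw [← sum_image (f := fun i => ‖X (P.pt (i + 1)) - X (P.pt i)‖ ^ q) hinj]
  refine sum_le_sum_of_subset_of_nonneg ?_ fun _ _ _ => by positivity
  simpa [subset_iff] using hg

def insertPoints (u v : ℕ → ℝ)
    (h : ∀ j < P.N, P.pt j ≤ u j ∧ u j ≤ v j ∧ v j ≤ P.pt (j + 1)) : Subdivision s t where
  N := 3 * P.N
  pt n := if n % 3 = 0 then P.pt (n / 3) else if n % 3 = 1 then u (n / 3) else v (n / 3)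
  pos := by have := P.pos; omega
  first := by simp [P.first]
  last := by simp [P.last]
  mono n hn := by
    obtain ⟨hu, huv, hv⟩ := h (n / 3) (by omega)
    rcases (by omega : n % 3 = 0 ∨ n % 3 = 1 ∨ n % 3 = 2) with h0 | h1 | h2
    · have h0' : (n + 1) % 3 = 1 := by omega
      have : (n + 1) / 3 = n / 3 := by omega
      simpa [h0, h0', this] using hu
    · have h1' : (n + 1) % 3 = 2 := by omega
      have : (n + 1) / 3 = n / 3 := by omega
      simpa [h1, h1', this] using huv
    · have h2' : (n + 1) % 3 = 0 := by omega
      have : (n + 1) / 3 = n / 3 + 1 := by omega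
      simpa [h2, h2', this] using hv

lemma sum_le_variationSum_insertPoints (X : ℝ → V) (u v : ℕ → ℝ)
    (h : ∀ j < P.N, P.pt j ≤ u j ∧ u j ≤ v j ∧ v j ≤ P.pt (j + 1)) :
    ∑ j ∈ range P.N, ‖X (v j) - X (u j)‖ ^ q ≤ (P.insertPoints u v h).variationSum q X := by
  set R := P.insertPoints u v h
  have hinj : Set.InjOn (fun j => 3 * j + 1) (range P.N) := fun a _ b _ hab => by
    simp only at hab; omega
  calc ∑ j ∈ range P.N, ‖X (v j) - X (u j)‖ ^ q
      = ∑ n ∈ (range P.N).image (fun j => 3 * j + 1), ‖X (R.pt (n + 1)) - X (R.pt n)‖ ^ q := by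
        rw [sum_image hinj]
        refine sum_congr rfl fun j _ => ?_
        have h1 : (3 * j + 1) % 3 = 1 := by omega
        have h2 : (3 * j + 1 + 1) % 3 = 2 := by omega
        have h3 : (3 * j + 1 + 1) / 3 = j := by omega
        have h4 : (3 * j + 1) / 3 = j := by omega
        simp [R, insertPoints, h1, h2, h3, h4]
    _ ≤ R.variationSum q X := by
        refine sum_le_sum_of_subset_of_nonneg ?_ fun _ _ _ => by positivity
        intro n hn
        simp only [mem_image, mem_range] at hn ⊢
        obtain ⟨j, hj, rfl⟩ := hn
        change _ < 3 * P.N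
        omega

lemma exists_sum_le_variationSum (X : ℝ → V) {J : Finset ℕ} (hJ : J ⊆ range P.N)
    (u v : ℕ → ℝ) (h : ∀ j ∈ J, P.pt j ≤ u j ∧ u j ≤ v j ∧ v j ≤ P.pt (j + 1)) :
    ∃ R : Subdivision s t, ∑ j ∈ J, ‖X (v j) - X (u j)‖ ^ q ≤ R.variationSum q X := by
  set u' : ℕ → ℝ := fun j => if j ∈ J then u j else P.pt j
  set v' : ℕ → ℝ := fun j => if j ∈ J then v j else P.pt j
  have h' : ∀ j < P.N, P.pt j ≤ u' j ∧ u' j ≤ v' j ∧ v' j ≤ P.pt (j + 1) := fun j hj => by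
    by_cases hjJ : j ∈ J
    · simpa [u', v', hjJ] using h j hjJ
    · simpa [u', v', hjJ] using P.mono j hj
  refine ⟨P.insertPoints u' v' h', ?_⟩
  calc ∑ j ∈ J, ‖X (v j) - X (u j)‖ ^ q = ∑ j ∈ J, ‖X (v' j) - X (u' j)‖ ^ q :=
        sum_congr rfl fun j hj => by simp [u', v', hj]
    _ ≤ ∑ j ∈ range P.N, ‖X (v' j) - X (u' j)‖ ^ q :=
        sum_le_sum_of_subset_of_nonneg hJ fun _ _ _ => by positivity
    _ ≤ _ := P.sum_le_variationSum_insertPoints X u' v' h'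

/-- The index `i < N` of a subinterval `[pt i, pt (i + 1)]` containing `x ∈ [s, t]`. -/
noncomputable def index (x : ℝ) : ℕ :=
  Nat.findGreatest (fun i => P.pt i ≤ x) (P.N - 1)

lemma index_lt (x : ℝ) : P.index x < P.N :=
  (Nat.findGreatest_le _).trans_lt (Nat.sub_lt P.pos one_pos)

lemma pt_index_le {x : ℝ} (hx : s ≤ x) : P.pt (P.index x) ≤ x :=
  Nat.findGreatest_spec (P := fun i => P.pt i ≤ x) (Nat.zero_le _) (by rwa [P.first])

lemma le_pt_index_succ {x : ℝ} (hx : x ≤ t) : x ≤ P.pt (P.index x + 1) := by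
  by_cases h : P.index x = P.N - 1
  · rw [h, Nat.sub_add_cancel P.pos, P.last]
    exact hx
  · have := P.index_lt x
    exact (not_le.mp (Nat.findGreatest_is_greatest (P := fun i => P.pt i ≤ x)
      (Nat.lt_succ_self _) (by unfold index at h this; omega))).le

lemma monotone_index : Monotone P.index := fun _ _ hxy =>
  Nat.findGreatest_mono_left (fun _ h => h.trans hxy) _

end Subdivision

section qVar

variable {V : Type u} [NormedAddCommGroup V] {q : ℝ} {X : ℝ → V}

lemma Subdivision.variationSum_le_toReal_qVar_rpow (hq : 0 < q) (hX : qVar q X ≠ ⊤)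
    (P : Subdivision 0 1) : P.variationSum q X ≤ (qVar q X).toReal ^ q := by
  have h : ENNReal.ofReal (P.variationSum q X ^ (1 / q)) ≤ qVar q X :=
    le_iSup (fun Q : Subdivision 0 1 => ENNReal.ofReal (Q.variationSum q X ^ (1 / q))) P
  rwa [ENNReal.ofReal_le_iff_le_toReal hX, one_div,
    Real.rpow_inv_le_iff_of_pos (P.variationSum_nonneg q X) ENNReal.toReal_nonneg hq] at h

lemma qVar_le_ofReal (hq : 0 < q) {b : ℝ} (hb : 0 ≤ b)
    (h : ∀ P : Subdivision 0 1, P.variationSum q X ≤ b ^ q) : qVar q X ≤ ENNReal.ofReal b :=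
  iSup_le fun P => ENNReal.ofReal_le_ofReal <| by
    change P.variationSum q X ^ (1 / q) ≤ b
    rw [one_div, Real.rpow_inv_le_iff_of_pos (P.variationSum_nonneg q X) hb hq]
    exact h P

end qVar

namespace IsPiecewiseLinearApprox

variable {V : Type*} [NormedAddCommGroup V] [NormedSpace ℝ V] {P : Subdivision 0 1}
  {X Y : ℝ → V} {q : ℝ}

lemma apply_pt (hY : IsPiecewiseLinearApprox P X Y) {k : ℕ} (hk : k < P.N) :
    Y (P.pt k) = X (P.pt k) := by
  simpa using hY k hk (P.pt k) le_rfl (P.mono k hk)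

lemma sub_eq (hY : IsPiecewiseLinearApprox P X Y) {k : ℕ} (hk : k < P.N) {x y : ℝ}
    (hx : P.pt k ≤ x) (hxy : x ≤ y) (hy : y ≤ P.pt (k + 1)) :
    Y y - Y x = ((y - x) / (P.pt (k + 1) - P.pt k)) • (X (P.pt (k + 1)) - X (P.pt k)) := by
  rw [hY k hk y (hx.trans hxy) hy, hY k hk x hx (hxy.trans hy), add_sub_add_left_eq_sub,
    ← sub_smul, div_sub_div_same, sub_sub_sub_cancel_right]

lemma norm_sub_le (hY : IsPiecewiseLinearApprox P X Y) {k : ℕ} (hk : k < P.N) {x y : ℝ}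
    (hx : P.pt k ≤ x) (hxy : x ≤ y) (hy : y ≤ P.pt (k + 1)) :
    ‖Y y - Y x‖ ≤ ‖X (P.pt (k + 1)) - X (P.pt k)‖ := by
  rw [hY.sub_eq hk hx hxy hy, norm_smul,
    Real.norm_of_nonneg (div_nonneg (by linarith) (by linarith))]
  exact mul_le_of_le_one_left (norm_nonneg _) (div_le_one_of_le₀ (by linarith) (by linarith))

lemma norm_sub_le_of_index_lt (hY : IsPiecewiseLinearApprox P X Y) {x y : ℝ} (hx : 0 ≤ x)
    (hy : y ≤ 1) (hxy : P.index x < P.index y) :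
    ‖Y y - Y x‖ ≤ ‖X (P.pt (P.index x + 1)) - X (P.pt (P.index x))‖
      + ‖X (P.pt (P.index y)) - X (P.pt (P.index x + 1))‖
      + ‖X (P.pt (P.index y + 1)) - X (P.pt (P.index y))‖ := by
  have hk := P.index_lt y
  have hxy' : x ≤ y := le_of_not_gt fun h => hxy.not_ge (P.monotone_index h.le)
  have hsplit : Y y - Y x = (Y (P.pt (P.index x + 1)) - Y x)
      + (X (P.pt (P.index y)) - X (P.pt (P.index x + 1))) + (Y y - Y (P.pt (P.index y))) := by
    rw [← hY.apply_pt hk, ← hY.apply_pt (by omega : P.index x + 1 < P.N)]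
    abel
  rw [hsplit]
  refine norm_add₃_le.trans (add_le_add_three ?_ le_rfl ?_)
  · exact hY.norm_sub_le (P.index_lt x) (P.pt_index_le hx) (P.le_pt_index_succ (hxy'.trans hy))
      le_rfl
  · exact hY.norm_sub_le hk le_rfl (P.pt_index_le (hx.trans hxy')) (P.le_pt_index_succ hy)

lemma sum_filter_index_eq_le (hY : IsPiecewiseLinearApprox P X Y) (hq : 1 ≤ q)
    (D : Subdivision 0 1) :
    ∑ j ∈ range D.N with P.index (D.pt j) = P.index (D.pt (j + 1)),
      ‖Y (D.pt (j + 1)) - Y (D.pt j)‖ ^ q ≤ P.variationSum q X := by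
  set f : ℕ → ℕ := fun j => P.index (D.pt j)
  set J := {j ∈ range D.N | f j = f (j + 1)}
  set μ : ℕ → ℝ := fun j => (D.pt (j + 1) - D.pt j) / (P.pt (f j + 1) - P.pt (f j))
  set ΔX : ℕ → ℝ := fun i => ‖X (P.pt (i + 1)) - X (P.pt i)‖ ^ q
  have hmem : ∀ j ∈ J, j < D.N ∧ f j = f (j + 1) := fun j hj => by simpa [J] using hj
  have hbounds : ∀ j ∈ J, P.pt (f j) ≤ D.pt j ∧ D.pt (j + 1) ≤ P.pt (f j + 1) := fun j hj => by
    obtain ⟨hjN, hf⟩ := hmem j hj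
    exact ⟨P.pt_index_le (D.pt_mem_Icc hjN.le).1, hf ▸ P.le_pt_index_succ (D.pt_mem_Icc hjN).2⟩
  have hstep : ∀ j ∈ J, ‖Y (D.pt (j + 1)) - Y (D.pt j)‖ ^ q ≤ μ j * ΔX (f j) := by
    intro j hj
    obtain ⟨hlo, hhi⟩ := hbounds j hj
    have hD := D.mono j (hmem j hj).1
    have hμ0 : 0 ≤ μ j := div_nonneg (by linarith) (by linarith)
    have hμ1 : μ j ≤ 1 := div_le_one_of_le₀ (by linarith) (by linarith)
    rw [hY.sub_eq (P.index_lt _) hlo hD hhi, norm_smul, Real.norm_of_nonneg hμ0,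
      Real.mul_rpow hμ0 (norm_nonneg _)]
    exact mul_le_mul_of_nonneg_right (Real.rpow_le_self_of_le_one hμ0 hμ1 hq) (by positivity)
  -- the steps inside one subinterval of `P` use up at most its length
  have hfibre : ∀ i ∈ range P.N, ∑ j ∈ J with f j = i, μ j ≤ 1 := by
    intro i hi
    have hPi := P.mono i (mem_range.mp hi)
    calc ∑ j ∈ J with f j = i, μ j
        = (∑ j ∈ J with f j = i, (D.pt (j + 1) - D.pt j)) / (P.pt (i + 1) - P.pt i) := by
          rw [sum_div]
          exact sum_congr rfl fun j hj => by simp only [μ, (mem_filter.mp hj).2]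
      _ ≤ 1 := by
          refine div_le_one_of_le₀ (sum_sub_le_of_forall_mem_Icc D.mono ?_ hPi ?_) (by linarith)
          · exact (filter_subset _ _).trans (filter_subset _ _)
          · intro j hj
            obtain ⟨hjJ, rfl⟩ := mem_filter.mp hj
            exact hbounds j hjJ
  calc ∑ j ∈ J, ‖Y (D.pt (j + 1)) - Y (D.pt j)‖ ^ q ≤ ∑ j ∈ J, μ j * ΔX (f j) := sum_le_sum hstep
    _ = ∑ i ∈ range P.N, ∑ j ∈ J with f j = i, μ j * ΔX (f j) :=
        (sum_fiberwise_of_maps_to (fun j _ => mem_range.mpr (P.index_lt _)) _).symm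
    _ = ∑ i ∈ range P.N, (∑ j ∈ J with f j = i, μ j) * ΔX i := by
        refine sum_congr rfl fun i _ => ?_
        rw [sum_mul]
        exact sum_congr rfl fun j hj => by rw [(mem_filter.mp hj).2]
    _ ≤ ∑ i ∈ range P.N, ΔX i :=
        sum_le_sum fun i hi => mul_le_of_le_one_left (by positivity) (hfibre i hi)

lemma sum_filter_index_lt_le (hY : IsPiecewiseLinearApprox P X Y) (hq : 1 ≤ q) {B : ℝ}
    (hB : ∀ Q : Subdivision 0 1, Q.variationSum q X ≤ B) (D : Subdivision 0 1) :
    ∑ j ∈ range D.N with P.index (D.pt j) < P.index (D.pt (j + 1)),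
      ‖Y (D.pt (j + 1)) - Y (D.pt j)‖ ^ q ≤ 3 ^ q * B := by
  -- A crossing step is bounded by the increments of `X` over the first and the last interval of
  -- `P` it meets, which are distinct for distinct steps, and over the part of `P` in between,
  -- which lies inside the step.
  set f : ℕ → ℕ := fun j => P.index (D.pt j)
  set J := {j ∈ range D.N | f j < f (j + 1)}
  have hmem : ∀ j ∈ J, j < D.N ∧ f j < f (j + 1) := fun j hj => by simpa [J] using hj
  have hf : ∀ {j j'}, j ≤ j' → j' ≤ D.N → f j ≤ f j' := fun h h' =>
    P.monotone_index (D.pt_le_pt h h')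
  have hfirst : Set.InjOn f J := StrictMonoOn.injOn fun j hj j' hj' hjj' =>
    (hmem j hj).2.trans_le (hf hjj' (hmem j' hj').1.le)
  have hlast : Set.InjOn (fun j => f (j + 1)) J := StrictMonoOn.injOn fun j hj j' hj' hjj' =>
    (hf hjj' (hmem j' hj').1.le).trans_lt (hmem j' hj').2
  obtain ⟨R, hR⟩ := D.exists_sum_le_variationSum X (filter_subset _ _)
    (fun j => P.pt (f j + 1)) (fun j => P.pt (f (j + 1))) fun j hj => by
      obtain ⟨hjN, hlt⟩ := hmem j hj
      exact ⟨P.le_pt_index_succ (D.pt_mem_Icc hjN.le).2, P.pt_le_pt hlt (P.index_lt _).le,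
        P.pt_index_le (D.pt_mem_Icc hjN).1⟩
  set a := fun j => ‖X (P.pt (f j + 1)) - X (P.pt (f j))‖
  set b := fun j => ‖X (P.pt (f (j + 1))) - X (P.pt (f j + 1))‖
  set c := fun j => ‖X (P.pt (f (j + 1) + 1)) - X (P.pt (f (j + 1)))‖
  calc ∑ j ∈ J, ‖Y (D.pt (j + 1)) - Y (D.pt j)‖ ^ q
      ≤ ∑ j ∈ J, 3 ^ (q - 1) * (a j ^ q + b j ^ q + c j ^ q) := by
        refine sum_le_sum fun j hj => ?_
        obtain ⟨hjN, hlt⟩ := hmem j hj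
        refine (Real.rpow_le_rpow (norm_nonneg _) (hY.norm_sub_le_of_index_lt
          (D.pt_mem_Icc hjN.le).1 (D.pt_mem_Icc hjN).2 hlt) (by linarith)).trans ?_
        exact add_add_rpow_le (norm_nonneg _) (norm_nonneg _) (norm_nonneg _) hq
    _ = 3 ^ (q - 1) * (∑ j ∈ J, a j ^ q + ∑ j ∈ J, b j ^ q + ∑ j ∈ J, c j ^ q) := by
        rw [← mul_sum, sum_add_distrib, sum_add_distrib]
    _ ≤ 3 ^ (q - 1) * (B + B + B) := by
        gcongr
        · exact (P.sum_comp_le_variationSum X (fun j _ => P.index_lt _) hfirst).trans (hB P)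
        · exact hR.trans (hB R)
        · exact (P.sum_comp_le_variationSum X (fun j _ => P.index_lt _) hlast).trans (hB P)
    _ = 3 ^ q * B := by
        rw [Real.rpow_sub_one (by norm_num : (3 : ℝ) ≠ 0)]
        ring

lemma variationSum_le (hY : IsPiecewiseLinearApprox P X Y) (hq : 1 ≤ q) {B : ℝ}
    (hB : ∀ Q : Subdivision 0 1, Q.variationSum q X ≤ B) (D : Subdivision 0 1) :
    D.variationSum q Y ≤ 4 ^ q * B := by
  have hB0 : 0 ≤ B := (P.variationSum_nonneg q X).trans (hB P)
  have hcross : {j ∈ range D.N | ¬P.index (D.pt j) = P.index (D.pt (j + 1))}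
      = {j ∈ range D.N | P.index (D.pt j) < P.index (D.pt (j + 1))} :=
    filter_congr fun j hj => (P.monotone_index (D.mono j (mem_range.mp hj))).lt_iff_ne.symm
  rw [Subdivision.variationSum, ← sum_filter_add_sum_filter_not _
    (fun j => P.index (D.pt j) = P.index (D.pt (j + 1))), hcross]
  calc _ ≤ B + 3 ^ q * B :=
        add_le_add ((hY.sum_filter_index_eq_le hq D).trans (hB P))
          (hY.sum_filter_index_lt_le hq hB D)
    _ = (1 ^ q + 3 ^ q) * B := by rw [Real.one_rpow]; ring
    _ ≤ 4 ^ q * B := by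
        gcongr
        exact (Real.add_rpow_le_rpow_add zero_le_one (by norm_num) hq).trans_eq (by norm_num)

end IsPiecewiseLinearApprox

theorem statement0_general (q : ℝ) (hq1 : 1 ≤ q) :
    ∃ c : ℝ, 0 < c ∧
      ∀ (V : Type u) [NormedAddCommGroup V] [NormedSpace ℝ V] [CompleteSpace V],
        ∀ X Y : ℝ → V,
          ContinuousOn X (Set.Icc 0 1) → qVar q X < ⊤ →
          ∀ P : Subdivision 0 1, IsPiecewiseLinearApprox P X Y →
            qVar q Y ≤ ENNReal.ofReal c * qVar q X := by
  refine ⟨4, by norm_num, fun V _ _ _ X Y _ hX P hY => ?_⟩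
  have hq : 0 < q := by linarith
  calc qVar q Y ≤ ENNReal.ofReal (4 * (qVar q X).toReal) :=
        qVar_le_ofReal hq (by positivity) fun D => by
          rw [Real.mul_rpow (by norm_num) ENNReal.toReal_nonneg]
          exact hY.variationSum_le hq1 (Subdivision.variationSum_le_toReal_qVar_rpow hq hX.ne) D
    _ = ENNReal.ofReal 4 * qVar q X := by
        rw [ENNReal.ofReal_mul (by norm_num), ENNReal.ofReal_toReal hX.ne]

/-- For `1 ≤ q < 2` there is a constant `c > 0` depending only on `q` such
that for every real Banach space `V`, every continuous path `X : [0,1] → V` of finite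
`q`-variation and every finite partition `P` of `[0,1]`, the piecewise linear approximation
`π_P X` satisfies `‖π_P X‖_q ≤ c ‖X‖_q`. -/
theorem statement0 (q : ℝ) (hq1 : 1 ≤ q) (hq2 : q < 2) :
    ∃ c : ℝ, 0 < c ∧
      ∀ (V : Type u) [NormedAddCommGroup V] [NormedSpace ℝ V] [CompleteSpace V],
        ∀ X Y : ℝ → V,
          ContinuousOn X (Set.Icc 0 1) → qVar q X < ⊤ →
          ∀ P : Subdivision 0 1, IsPiecewiseLinearApprox P X Y →
            qVar q Y ≤ ENNReal.ofReal c * qVar q X :=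
  statement0_general q hq1
end

section
/- Let 1 ≤ q < 2, let V be a real Banach space, let ω be a control function, let A ≥ 0, and let Ω, I : [0,1] → L(V,V) (bounded linear operators on V, with operator norm) satisfy ‖Ω(t) − Ω(s)‖ ≤ ω(s,t)^{1/q} and ‖I(t) − I(s)‖ ≤ A ω(s,t)^{1/q} for all 0 ≤ s ≤ t ≤ 1. Then for every (s,t) ∈ Δ and every finite partition P = {s = t_0 < t_1 < ⋯ < t_N = t} of [s,t], the left-point Riemann–Stieltjes sum S_P := Σ_{i=1}^N (Ω(t_i) − Ω(t_{i−1})) ∘ I(t_{i−1}) satisfies ‖S_P − (Ω(t) − Ω(s)) ∘ I(s)‖ ≤ A · 2^{2/q} · ζ(2/q) · ω(s,t)^{2/q}. -/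
/-!
STATEMENT 3: estimate for left-point Riemann–Stieltjes sums against the trivial partition.
-/

universe u

/-- A control function on the simplex `Δ = {0 ≤ s ≤ t ≤ 1}`: continuous, nonnegative,
vanishing on the diagonal and superadditive. -/
def IsControl (ω : ℝ → ℝ → ℝ) : Prop :=
  ContinuousOn (fun p : ℝ × ℝ => ω p.1 p.2) {p : ℝ × ℝ | 0 ≤ p.1 ∧ p.1 ≤ p.2 ∧ p.2 ≤ 1} ∧
  (∀ t, 0 ≤ t → t ≤ 1 → ω t t = 0) ∧
  (∀ s t, 0 ≤ s → s ≤ t → t ≤ 1 → 0 ≤ ω s t) ∧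
  (∀ s u t, 0 ≤ s → s ≤ u → u ≤ t → t ≤ 1 → ω s u + ω u t ≤ ω s t)

/-- `ζ(θ) = ∑_{n=1}^∞ n^{-θ}`. -/
noncomputable def zetaR (θ : ℝ) : ℝ := ∑' n : ℕ, ((n : ℝ) + 1) ^ (-θ)

namespace Stmt3Aux

lemma steps_mono {f : ℕ → ℝ} {n : ℕ} (h : ∀ i < n, f i ≤ f (i + 1)) :
    ∀ i j, i ≤ j → j ≤ n → f i ≤ f j := by
  intro i j
  induction j with
  | zero => intro hij _; rw [Nat.le_zero.mp hij]
  | succ j ih =>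
    intro hij hjn
    rcases Nat.le_succ_iff.mp hij with h' | h'
    · exact le_trans (ih h' (by omega)) (h j (by omega))
    · rw [h']

lemma control_mono {ω : ℝ → ℝ → ℝ} (hω : IsControl ω) {s u v t : ℝ}
    (hs : 0 ≤ s) (h1 : s ≤ u) (h2 : u ≤ v) (h3 : v ≤ t) (ht : t ≤ 1) :
    ω u v ≤ ω s t := by
  obtain ⟨-, -, hnn, hsup⟩ := hω
  have h4 := hsup s u v hs h1 h2 (by linarith)
  have h5 := hsup s v t hs (by linarith) h3 ht
  have h6 := hnn s u hs h1 (by linarith)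
  have h7 := hnn v t (by linarith) h3 ht
  linarith

lemma chain_sum {ω : ℝ → ℝ → ℝ} (hω : IsControl ω) (f : ℕ → ℝ) :
    ∀ m, 0 ≤ f 0 → f m ≤ 1 → (∀ i < m, f i ≤ f (i + 1)) →
    ∑ i ∈ Finset.range m, ω (f i) (f (i + 1)) ≤ ω (f 0) (f m) := by
  intro m
  induction m with
  | zero => intro h0 h1 _; simpa using hω.2.2.1 (f 0) (f 0) h0 le_rfl h1
  | succ m ih =>
    intro h0 h1 hmono
    have hmn : f m ≤ f (m + 1) := hmono m (by omega)
    have hsum := ih h0 (le_trans hmn h1) (fun i hi => hmono i (by omega))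
    rw [Finset.sum_range_succ]
    have h0m : f 0 ≤ f m := steps_mono hmono 0 m (by omega) (by omega)
    have hsup := hω.2.2.2 (f 0) (f m) (f (m + 1)) h0 h0m hmn h1
    linarith

lemma sum_parity_split (a : ℕ → ℝ) :
    ∀ m, ∑ j ∈ Finset.range m, a j =
      (∑ i ∈ Finset.range ((m + 1) / 2), a (2 * i)) +
      ∑ i ∈ Finset.range (m / 2), a (2 * i + 1) := by
  intro m
  induction m with
  | zero => simp
  | succ m ih =>
    rw [Finset.sum_range_succ, ih]
    rcases Nat.even_or_odd m with hm | hm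
    · obtain ⟨k, hk⟩ := hm
      subst hk
      have h1 : (k + k + 1 + 1) / 2 = ((k + k + 1) / 2) + 1 := by omega
      have h2 : (k + k + 1) / 2 = k := by omega
      have h3 : (k + k) / 2 = k := by omega
      rw [h1, h2, h3, Finset.sum_range_succ]
      have : 2 * k = k + k := by ring
      rw [this]
      abel
    · obtain ⟨k, hk⟩ := hm
      subst hk
      have h1 : (2 * k + 1 + 1 + 1) / 2 = (2 * k + 1 + 1) / 2 := by omega
      have h2 : (2 * k + 1 + 1) / 2 = ((2 * k + 1) / 2) + 1 := by omega
      have h3 : (2 * k + 1) / 2 = k := by omega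
      rw [h1, h2, h3, Finset.sum_range_succ, Finset.sum_range_succ]
      ring

lemma double_sum_le {ω : ℝ → ℝ → ℝ} (hω : IsControl ω) (f : ℕ → ℝ) (n : ℕ)
    (hn : 1 ≤ n) (h0 : 0 ≤ f 0) (h1 : f n ≤ 1) (hmono : ∀ i < n, f i ≤ f (i + 1)) :
    ∑ j ∈ Finset.range (n - 1), ω (f j) (f (j + 2)) ≤ 2 * ω (f 0) (f n) := by
  have hfm := steps_mono hmono
  have hf0 : ∀ i, i ≤ n → 0 ≤ f i := fun i hi => le_trans h0 (hfm 0 i (by omega) hi)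
  have hf1 : ∀ i, i ≤ n → f i ≤ 1 := fun i hi => le_trans (hfm i n hi le_rfl) h1
  rw [sum_parity_split]
  have heven : ∑ i ∈ Finset.range ((n - 1 + 1) / 2), ω (f (2 * i)) (f (2 * i + 2)) ≤
      ω (f 0) (f n) := by
    have hk : n / 2 = (n - 1 + 1) / 2 := by omega
    have hchain := chain_sum hω (fun i => f (2 * i)) (n / 2) h0
      (hf1 _ (by omega)) (fun i hi => hfm (2 * i) (2 * (i + 1)) (by omega) (by omega))
    rw [← hk]
    calc ∑ i ∈ Finset.range (n / 2), ω (f (2 * i)) (f (2 * i + 2))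
        = ∑ i ∈ Finset.range (n / 2), ω (f (2 * i)) (f (2 * (i + 1))) := by
          apply Finset.sum_congr rfl; intro i _; ring_nf
      _ ≤ ω (f 0) (f (2 * (n / 2))) := hchain
      _ ≤ ω (f 0) (f n) := control_mono hω h0 le_rfl
          (hfm 0 (2 * (n / 2)) (by omega) (by omega))
          (hfm (2 * (n / 2)) n (by omega) le_rfl) h1
  have hodd : ∑ i ∈ Finset.range ((n - 1) / 2), ω (f (2 * i + 1)) (f (2 * i + 1 + 2)) ≤
      ω (f 0) (f n) := by
    set m := (n - 1) / 2 with hm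
    have hchain := chain_sum hω (fun i => f (2 * i + 1)) m
      (hf0 1 (by omega)) (hf1 _ (by omega))
      (fun i hi => hfm (2 * i + 1) (2 * (i + 1) + 1) (by omega) (by omega))
    calc ∑ i ∈ Finset.range m, ω (f (2 * i + 1)) (f (2 * i + 1 + 2))
        = ∑ i ∈ Finset.range m, ω (f (2 * i + 1)) (f (2 * (i + 1) + 1)) := by
          apply Finset.sum_congr rfl; intro i _; ring_nf
      _ ≤ ω (f 1) (f (2 * m + 1)) := hchain
      _ ≤ ω (f 0) (f n) := control_mono hω h0 (hfm 0 1 (by omega) (by omega))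
          (hfm 1 (2 * m + 1) (by omega) (by omega))
          (hfm (2 * m + 1) n (by omega) le_rfl) h1
  have e1 : ∀ i, (2 * i : ℕ) + 2 = 2 * i + 2 := fun _ => rfl
  calc (∑ i ∈ Finset.range ((n - 1 + 1) / 2), ω (f (2 * i)) (f (2 * i + 2))) +
        ∑ i ∈ Finset.range ((n - 1) / 2), ω (f (2 * i + 1)) (f (2 * i + 1 + 2))
      ≤ ω (f 0) (f n) + ω (f 0) (f n) := add_le_add heven hodd
    _ = 2 * ω (f 0) (f n) := by ring

lemma exists_small {ω : ℝ → ℝ → ℝ} (hω : IsControl ω) (f : ℕ → ℝ) (n : ℕ)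
    (hn : 2 ≤ n) (h0 : 0 ≤ f 0) (h1 : f n ≤ 1) (hmono : ∀ i < n, f i ≤ f (i + 1)) :
    ∃ j < n - 1, ω (f j) (f (j + 2)) ≤ 2 * ω (f 0) (f n) / ((n : ℝ) - 1) := by
  have hds := double_sum_le hω f n (by omega) h0 h1 hmono
  have hcard : ((n - 1 : ℕ) : ℝ) = (n : ℝ) - 1 := by
    push_cast [Nat.cast_sub (by omega : 1 ≤ n)]; ring
  have hne : ((n : ℝ) - 1) ≠ 0 := by
    have : (2 : ℝ) ≤ (n : ℝ) := by exact_mod_cast hn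
    linarith
  have hsum2 : ∑ j ∈ Finset.range (n - 1), ω (f j) (f (j + 2)) ≤
      ∑ _j ∈ Finset.range (n - 1), 2 * ω (f 0) (f n) / ((n : ℝ) - 1) := by
    rw [Finset.sum_const, Finset.card_range, nsmul_eq_mul, hcard]
    field_simp
    linarith
  obtain ⟨j, hj, hle⟩ := Finset.exists_le_of_sum_le
    (Finset.nonempty_range_iff.mpr (by omega)) hsum2
  exact ⟨j, Finset.mem_range.mp hj, hle⟩

variable {V : Type u} [NormedAddCommGroup V] [NormedSpace ℝ V]

lemma remove_point (Ω I : ℝ → V →L[ℝ] V) (f : ℕ → ℝ) (n jj : ℕ) (hjj : jj < n) :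
    ∑ i ∈ Finset.range (n + 1), (Ω (f (i + 1)) - Ω (f i)).comp (I (f i)) =
      (∑ i ∈ Finset.range n,
        (Ω ((fun i => if i ≤ jj then f i else f (i + 1)) (i + 1)) -
          Ω ((fun i => if i ≤ jj then f i else f (i + 1)) i)).comp
            (I ((fun i => if i ≤ jj then f i else f (i + 1)) i)))
      + (Ω (f (jj + 2)) - Ω (f (jj + 1))).comp (I (f (jj + 1)) - I (f jj)) := by
  set T : ℕ → V →L[ℝ] V := fun i => (Ω (f (i + 1)) - Ω (f i)).comp (I (f i)) with hT
  set g : ℕ → ℝ := fun i => if i ≤ jj then f i else f (i + 1) with hg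
  set Tg : ℕ → V →L[ℝ] V := fun i => (Ω (g (i + 1)) - Ω (g i)).comp (I (g i)) with hTg
  have split1 : ∑ i ∈ Finset.range (n + 1), T i =
      ((∑ i ∈ Finset.range jj, T i) + T jj + T (jj + 1)) + ∑ i ∈ Finset.Ico (jj + 2) (n + 1), T i := by
    rw [Finset.range_eq_Ico, ← Finset.sum_Ico_consecutive T (by omega : 0 ≤ jj + 2) (by omega : jj + 2 ≤ n + 1),
      ← Finset.range_eq_Ico, Finset.sum_range_succ, Finset.sum_range_succ]
  have split2 : ∑ i ∈ Finset.range n, Tg i =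
      ((∑ i ∈ Finset.range jj, Tg i) + Tg jj) + ∑ i ∈ Finset.Ico (jj + 1) n, Tg i := by
    rw [Finset.range_eq_Ico, ← Finset.sum_Ico_consecutive Tg (by omega : 0 ≤ jj + 1) (by omega : jj + 1 ≤ n),
      ← Finset.range_eq_Ico, Finset.sum_range_succ]
  have hsame : ∀ i ∈ Finset.range jj, Tg i = T i := by
    intro i hi
    have hi' : i < jj := Finset.mem_range.mp hi
    simp only [hTg, hT, hg]
    rw [if_pos (by omega : i + 1 ≤ jj), if_pos (by omega : i ≤ jj)]
  have htail : ∑ i ∈ Finset.Ico (jj + 1) n, Tg i = ∑ i ∈ Finset.Ico (jj + 2) (n + 1), T i := by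
    have := Finset.sum_Ico_add' T (jj + 1) n 1
    rw [← this]
    apply Finset.sum_congr rfl
    intro i hi
    have hi' : jj + 1 ≤ i := (Finset.mem_Ico.mp hi).1
    simp only [hTg, hT, hg]
    rw [if_neg (by omega), if_neg (by omega)]
  have hmid : Tg jj = (Ω (f (jj + 2)) - Ω (f jj)).comp (I (f jj)) := by
    simp only [hTg, hg]
    rw [if_neg (by omega : ¬ jj + 1 ≤ jj), if_pos (le_refl jj)]
  rw [split1, split2, Finset.sum_congr rfl hsame, htail, hmid]
  simp only [hT, ContinuousLinearMap.sub_comp, ContinuousLinearMap.comp_sub]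
  abel

lemma main_est (q : ℝ) (hq1 : 1 ≤ q) (hq2 : q < 2)
    {ω : ℝ → ℝ → ℝ} (hω : IsControl ω) (A : ℝ) (hA : 0 ≤ A)
    (Ω I : ℝ → V →L[ℝ] V)
    (hΩ : ∀ s t, 0 ≤ s → s ≤ t → t ≤ 1 → ‖Ω t - Ω s‖ ≤ ω s t ^ (1 / q))
    (hI : ∀ s t, 0 ≤ s → s ≤ t → t ≤ 1 → ‖I t - I s‖ ≤ A * ω s t ^ (1 / q)) :
    ∀ n, 1 ≤ n → ∀ f : ℕ → ℝ, 0 ≤ f 0 → f n ≤ 1 → (∀ i < n, f i ≤ f (i + 1)) →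
    ‖(∑ i ∈ Finset.range n, (Ω (f (i + 1)) - Ω (f i)).comp (I (f i))) -
        (Ω (f n) - Ω (f 0)).comp (I (f 0))‖ ≤
      A * ∑ k ∈ Finset.range (n - 1), (2 * ω (f 0) (f n) / ((k : ℝ) + 1)) ^ ((2 : ℝ) / q) := by
  have hq0 : 0 < q := lt_of_lt_of_le one_pos hq1
  intro n
  induction n using Nat.strong_induction_on with
  | _ n ih =>
    intro hn f h0 h1 hmono
    rcases Nat.lt_or_ge n 2 with hn2 | hn2
    · -- n = 1
      have : n = 1 := by omega
      subst this
      simp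
    · -- n ≥ 2 : write n = m + 1
      obtain ⟨m, rfl⟩ : ∃ m, n = m + 1 := ⟨n - 1, by omega⟩
      have hm1 : 1 ≤ m := by omega
      have hfm := steps_mono hmono
      have hf0 : ∀ i, i ≤ m + 1 → 0 ≤ f i := fun i hi => le_trans h0 (hfm 0 i (by omega) hi)
      have hf1 : ∀ i, i ≤ m + 1 → f i ≤ 1 := fun i hi => le_trans (hfm i (m + 1) hi le_rfl) h1
      obtain ⟨jj, hjjlt, hjj⟩ := exists_small hω f (m + 1) (by omega) h0 h1 hmono
      have hjm : jj < m := by omega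
      have hcast : ((m : ℝ) + 1) - 1 = (m : ℝ) := by ring
      rw [show ((m + 1 : ℕ) : ℝ) - 1 = (m : ℝ) by push_cast; ring] at hjj
      set g : ℕ → ℝ := fun i => if i ≤ jj then f i else f (i + 1) with hg
      have hg0 : g 0 = f 0 := by simp [hg]
      have hgm : g m = f (m + 1) := by simp [hg, if_neg (by omega : ¬ m ≤ jj)]
      have hgmono : ∀ i < m, g i ≤ g (i + 1) := by
        intro i hi
        simp only [hg]
        rcases Nat.lt_or_ge (i + 1) (jj + 1) with h | h
        · rw [if_pos (by omega), if_pos (by omega)]; exact hmono i (by omega)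
        · rcases Nat.eq_or_lt_of_le h with h' | h'
          · rw [if_pos (by omega), if_neg (by omega)]
            exact hfm i (i + 2) (by omega) (by omega)
          · rw [if_neg (by omega), if_neg (by omega)]
            exact hmono (i + 1) (by omega)
      have hIH := ih m (by omega) hm1 g (by rw [hg0]; exact h0) (by rw [hgm]; exact h1) hgmono
      rw [hg0, hgm] at hIH
      have hrem := remove_point Ω I f m jj hjm
      set D := (Ω (f (jj + 2)) - Ω (f (jj + 1))).comp (I (f (jj + 1)) - I (f jj)) with hD
      -- bound on D
      have hz : 0 ≤ ω (f jj) (f (jj + 2)) :=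
        hω.2.2.1 _ _ (hf0 jj (by omega)) (hfm jj (jj + 2) (by omega) (by omega)) (hf1 _ (by omega))
      have hDbound : ‖D‖ ≤ A * ω (f jj) (f (jj + 2)) ^ ((2 : ℝ) / q) := by
        have h1' : ‖Ω (f (jj + 2)) - Ω (f (jj + 1))‖ ≤ ω (f (jj + 1)) (f (jj + 2)) ^ (1 / q) :=
          hΩ _ _ (hf0 _ (by omega)) (hfm (jj + 1) (jj + 2) (by omega) (by omega)) (hf1 _ (by omega))
        have h2' : ‖I (f (jj + 1)) - I (f jj)‖ ≤ A * ω (f jj) (f (jj + 1)) ^ (1 / q) :=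
          hI _ _ (hf0 _ (by omega)) (hfm jj (jj + 1) (by omega) (by omega)) (hf1 _ (by omega))
        have hm1' : ω (f (jj + 1)) (f (jj + 2)) ≤ ω (f jj) (f (jj + 2)) :=
          control_mono hω (hf0 jj (by omega)) (hfm jj (jj + 1) (by omega) (by omega)) (hfm (jj + 1) (jj + 2) (by omega) (by omega)) le_rfl (hf1 _ (by omega))
        have hm2' : ω (f jj) (f (jj + 1)) ≤ ω (f jj) (f (jj + 2)) :=
          control_mono hω (hf0 jj (by omega)) le_rfl (hfm jj (jj + 1) (by omega) (by omega)) (hfm (jj + 1) (jj + 2) (by omega) (by omega)) (hf1 _ (by omega))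
        have hnn1 : 0 ≤ ω (f (jj + 1)) (f (jj + 2)) :=
          hω.2.2.1 _ _ (hf0 _ (by omega)) (hfm (jj + 1) (jj + 2) (by omega) (by omega)) (hf1 _ (by omega))
        have hnn2 : 0 ≤ ω (f jj) (f (jj + 1)) :=
          hω.2.2.1 _ _ (hf0 _ (by omega)) (hfm jj (jj + 1) (by omega) (by omega)) (hf1 _ (by omega))
        have hr1 : ω (f (jj + 1)) (f (jj + 2)) ^ (1 / q) ≤ ω (f jj) (f (jj + 2)) ^ (1 / q) :=
          Real.rpow_le_rpow hnn1 hm1' (by positivity)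
        have hr2 : ω (f jj) (f (jj + 1)) ^ (1 / q) ≤ ω (f jj) (f (jj + 2)) ^ (1 / q) :=
          Real.rpow_le_rpow hnn2 hm2' (by positivity)
        have hexp : ω (f jj) (f (jj + 2)) ^ ((2 : ℝ) / q) =
            ω (f jj) (f (jj + 2)) ^ (1 / q) * ω (f jj) (f (jj + 2)) ^ (1 / q) := by
          rw [← Real.rpow_add' hz (by positivity : 1 / q + 1 / q ≠ 0)]
          norm_num
          ring_nf
        calc ‖D‖ ≤ ‖Ω (f (jj + 2)) - Ω (f (jj + 1))‖ * ‖I (f (jj + 1)) - I (f jj)‖ :=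
              ContinuousLinearMap.opNorm_comp_le _ _
          _ ≤ ω (f (jj + 1)) (f (jj + 2)) ^ (1 / q) * (A * ω (f jj) (f (jj + 1)) ^ (1 / q)) := by
              apply mul_le_mul h1' h2' (norm_nonneg _) (by positivity)
          _ = A * (ω (f (jj + 1)) (f (jj + 2)) ^ (1 / q) * ω (f jj) (f (jj + 1)) ^ (1 / q)) := by ring
          _ ≤ A * (ω (f jj) (f (jj + 2)) ^ (1 / q) * ω (f jj) (f (jj + 2)) ^ (1 / q)) := by
              apply mul_le_mul_of_nonneg_left _ hA
              exact mul_le_mul hr1 hr2 (by positivity) (by positivity)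
          _ = A * ω (f jj) (f (jj + 2)) ^ ((2 : ℝ) / q) := by rw [hexp]
      have hc0 : (0 : ℝ) < (m : ℝ) := by exact_mod_cast hm1
      have hωst : 0 ≤ ω (f 0) (f (m + 1)) :=
        hω.2.2.1 _ _ h0 (hfm 0 (m + 1) (by omega) le_rfl) h1
      have hzc : ω (f jj) (f (jj + 2)) ^ ((2 : ℝ) / q) ≤
          (2 * ω (f 0) (f (m + 1)) / (m : ℝ)) ^ ((2 : ℝ) / q) :=
        Real.rpow_le_rpow hz hjj (by positivity)
      -- combine
      have key : (∑ i ∈ Finset.range (m + 1), (Ω (f (i + 1)) - Ω (f i)).comp (I (f i))) -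
          (Ω (f (m + 1)) - Ω (f 0)).comp (I (f 0)) =
          ((∑ i ∈ Finset.range m, (Ω (g (i + 1)) - Ω (g i)).comp (I (g i))) -
            (Ω (f (m + 1)) - Ω (f 0)).comp (I (f 0))) + D := by
        rw [hrem]; abel
      rw [key]
      calc ‖((∑ i ∈ Finset.range m, (Ω (g (i + 1)) - Ω (g i)).comp (I (g i))) -
            (Ω (f (m + 1)) - Ω (f 0)).comp (I (f 0))) + D‖
          ≤ ‖(∑ i ∈ Finset.range m, (Ω (g (i + 1)) - Ω (g i)).comp (I (g i))) -
            (Ω (f (m + 1)) - Ω (f 0)).comp (I (f 0))‖ + ‖D‖ := norm_add_le _ _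
        _ ≤ (A * ∑ k ∈ Finset.range (m - 1), (2 * ω (f 0) (f (m + 1)) / ((k : ℝ) + 1)) ^ ((2 : ℝ) / q))
            + A * (2 * ω (f 0) (f (m + 1)) / (m : ℝ)) ^ ((2 : ℝ) / q) := by
            apply add_le_add hIH
            exact le_trans hDbound (mul_le_mul_of_nonneg_left hzc hA)
        _ = A * ∑ k ∈ Finset.range (m + 1 - 1), (2 * ω (f 0) (f (m + 1)) / ((k : ℝ) + 1)) ^ ((2 : ℝ) / q) := by
            have : m + 1 - 1 = (m - 1) + 1 := by omega
            rw [this, Finset.sum_range_succ]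
            have hcast2 : ((m - 1 : ℕ) : ℝ) + 1 = (m : ℝ) := by
              push_cast [Nat.cast_sub hm1]; ring
            rw [hcast2]
            ring

end Stmt3Aux

/-- Estimate of the left-point Riemann–Stieltjes sum
`S_P = ∑ (Ω(t_i) − Ω(t_{i−1})) ∘ I(t_{i−1})` against `(Ω(t) − Ω(s)) ∘ I(s)`. -/
theorem statement3 (q : ℝ) (hq1 : 1 ≤ q) (hq2 : q < 2)
    (V : Type u) [NormedAddCommGroup V] [NormedSpace ℝ V] [CompleteSpace V]
    (ω : ℝ → ℝ → ℝ) (hω : IsControl ω) (A : ℝ) (hA : 0 ≤ A)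
    (Ω I : ℝ → V →L[ℝ] V)
    (hΩ : ∀ s t, 0 ≤ s → s ≤ t → t ≤ 1 → ‖Ω t - Ω s‖ ≤ ω s t ^ (1 / q))
    (hI : ∀ s t, 0 ≤ s → s ≤ t → t ≤ 1 → ‖I t - I s‖ ≤ A * ω s t ^ (1 / q)) :
    ∀ s t, 0 ≤ s → s ≤ t → t ≤ 1 → ∀ P : Subdivision s t,
      ‖(∑ i ∈ Finset.range P.N, (Ω (P.pt (i + 1)) - Ω (P.pt i)).comp (I (P.pt i)))
          - (Ω t - Ω s).comp (I s)‖
        ≤ A * 2 ^ ((2 : ℝ) / q) * zetaR (2 / q) * ω s t ^ ((2 : ℝ) / q) := by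
  intro s t hs hst ht1 P
  have hq0 : 0 < q := lt_of_lt_of_le one_pos hq1
  set θ : ℝ := 2 / q with hθ
  have hθ1 : 1 < θ := by
    rw [hθ, lt_div_iff₀ hq0]; linarith
  have hθ0 : 0 < θ := by linarith
  have hωst : 0 ≤ ω s t := hω.2.2.1 s t hs hst ht1
  have hmain := Stmt3Aux.main_est q hq1 hq2 hω A hA Ω I hΩ hI P.N P.pos P.pt
    (by rw [P.first]; exact hs) (by rw [P.last]; exact ht1) P.mono
  rw [P.first, P.last] at hmain
  refine le_trans hmain ?_
  -- bound the finite sum by the zeta series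
  have hsummable : Summable (fun n : ℕ => ((n : ℝ) + 1) ^ (-θ)) := by
    have h1 : Summable (fun n : ℕ => (n : ℝ) ^ (-θ)) :=
      Real.summable_nat_rpow.mpr (by linarith)
    have h2 := (summable_nat_add_iff 1).mpr h1
    refine h2.congr ?_
    intro n
    push_cast
    ring_nf
  have hzeta0 : 0 ≤ zetaR θ := tsum_nonneg (fun n => by positivity)
  have hterm : ∀ k : ℕ, (2 * ω s t / ((k : ℝ) + 1)) ^ θ =
      2 ^ θ * ω s t ^ θ * (((k : ℝ) + 1) ^ (-θ)) := by
    intro k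
    have hk0 : (0 : ℝ) < (k : ℝ) + 1 := by positivity
    rw [Real.div_rpow (by positivity) (le_of_lt hk0),
      Real.mul_rpow (by norm_num) hωst, Real.rpow_neg (le_of_lt hk0)]
    ring
  have hsumle : ∑ k ∈ Finset.range (P.N - 1), (2 * ω s t / ((k : ℝ) + 1)) ^ θ ≤
      2 ^ θ * ω s t ^ θ * zetaR θ := by
    calc ∑ k ∈ Finset.range (P.N - 1), (2 * ω s t / ((k : ℝ) + 1)) ^ θ
        = ∑ k ∈ Finset.range (P.N - 1), 2 ^ θ * ω s t ^ θ * (((k : ℝ) + 1) ^ (-θ)) :=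
          Finset.sum_congr rfl (fun k _ => hterm k)
      _ = 2 ^ θ * ω s t ^ θ * ∑ k ∈ Finset.range (P.N - 1), ((k : ℝ) + 1) ^ (-θ) := by
          rw [Finset.mul_sum]
      _ ≤ 2 ^ θ * ω s t ^ θ * zetaR θ := by
          apply mul_le_mul_of_nonneg_left _ (by positivity)
          exact Summable.sum_le_tsum _ (fun k _ => by positivity) hsummable
  calc A * ∑ k ∈ Finset.range (P.N - 1), (2 * ω s t / ((k : ℝ) + 1)) ^ θ
      ≤ A * (2 ^ θ * ω s t ^ θ * zetaR θ) := mul_le_mul_of_nonneg_left hsumle hA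
    _ = A * 2 ^ θ * zetaR θ * ω s t ^ θ := by ring
end

section
/- Let 1 ≤ q < 2, let V be a real Banach space, let ω be a control function, and let Ω, Ω̂ : [0,1] → L(V,V) satisfy ‖Ω(t) − Ω(s)‖ ≤ ω(s,t)^{1/q}, ‖Ω̂(t) − Ω̂(s)‖ ≤ ω(s,t)^{1/q}, and ‖(Ω(t) − Ω(s)) − (Ω̂(t) − Ω̂(s))‖ ≤ ε ω(s,t)^{1/q} for all 0 ≤ s ≤ t ≤ 1, where ε ≥ 0. Fix 0 < T ≤ 1 and set K := ω(0,T)^{1/q} (1 + 2^{2/q} ζ(2/q)). Let I^n and Î^n be the iterated Young integrals of Ω and Ω̂ respectively, defined by I^0(t) = Id_V and I^{n+1}(t) := ∫_0^t dΩ · I^n (the limit of left-point Riemann–Stieltjes sums Σ (Ω(t_i) − Ω(t_{i−1})) ∘ I^n(t_{i−1}) as the mesh tends to 0), and similarly for Î^n with Ω̂. Then for every n ≥ 1 and all 0 ≤ s ≤ t ≤ T, ‖(I^n(t) − I^n(s)) − (Î^n(t) − Î^n(s))‖ ≤ ε n K^{n−1} ω(s,t)^{1/q}. -/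
universe u

/-- `L = ∫_s^t dΩ · G` in the sense of left-point Riemann–Stieltjes sums. -/
def RSLimit {V : Type u} [NormedAddCommGroup V] [NormedSpace ℝ V]
    (Ω G : ℝ → V →L[ℝ] V) (s t : ℝ) (L : V →L[ℝ] V) : Prop :=
  ∀ ε > (0 : ℝ), ∃ δ > (0 : ℝ), ∀ P : Subdivision s t, P.mesh < δ →
    ‖(∑ i ∈ Finset.range P.N, (Ω (P.pt (i + 1)) - Ω (P.pt i)).comp (G (P.pt i))) - L‖ ≤ ε

/-- `I` is the family of iterated Young integrals of `Ω` on `[0,T]`: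
`I^0 = Id` and `I^{n+1}(t) = ∫_0^t dΩ · I^n`. -/
def IsIteratedIntegrals {V : Type u} [NormedAddCommGroup V] [NormedSpace ℝ V]
    (Ω : ℝ → V →L[ℝ] V) (T : ℝ) (I : ℕ → ℝ → V →L[ℝ] V) : Prop :=
  (∀ t, I 0 t = ContinuousLinearMap.id ℝ V) ∧
  (∀ n, I (n + 1) 0 = 0) ∧
  (∀ n t, 0 ≤ t → t ≤ T → RSLimit Ω (I n) 0 t (I (n + 1) t))

/-!
Young's sewing argument. If a germ `Ξ` satisfies
`‖Ξ a c - Ξ a b - Ξ b c‖ ≤ M ω(a,c)^θ` with `θ > 1`, removing from a partition of `[s,t]`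
into `N + 1` pieces the point whose neighbours span the smallest `ω`-interval changes the
Riemann sum by at most `M (2 ω(s,t) / N)^θ` (the intervals `[u_j, u_{j+2}]` cover `[s,t]` at
most twice, and `ω` is superadditive), so every limit of Riemann sums lies within `M 2^θ ζ(θ) ω(s,t)^θ` of
`Ξ s t`. With `θ = 2/q` this applies to the germ
`(Ω b - Ω a) I^n a - (Ω̂ b - Ω̂ a) Î^n a = (δΩ - δΩ̂)_{ab} I^n a + (Ω̂ b - Ω̂ a) (I^n a - Î^n a)`,
and `ω(s,t)^{2/q} ≤ ω(0,T)^{1/q} ω(s,t)^{1/q}` turns the error into a multiple of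
`ω(s,t)^{1/q}`. By induction on `n`, the increments of `I^n` and `Î^n` are bounded by
`K^{n-1} ω^{1/q}` and those of `I^n - Î^n` by `ε n K^{n-1} ω^{1/q}`: with
`K = ω(0,T)^{1/q} (1 + 2^{2/q} ζ(2/q))` both recursions close exactly.
-/

open Finset

lemma monotoneOn_Iic_of_le_succ {u : ℕ → ℝ} {n : ℕ} (h : ∀ i < n, u i ≤ u (i + 1)) :
    MonotoneOn u (Set.Iic n) :=
  monotoneOn_of_le_succ Set.ordConnected_Iic fun i _ _ hi => by
    simpa [Order.succ_eq_add_one] using h i (by simpa [Order.succ_eq_add_one] using hi)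

lemma rpow_two_mul_eq_mul_self {x : ℝ} (hx : 0 ≤ x) (p : ℝ) : x ^ (2 * p) = x ^ p * x ^ p := by
  rw [mul_comm, Real.rpow_mul hx, Real.rpow_two, sq]

namespace IsControl

variable {ω : ℝ → ℝ → ℝ}

lemma nonneg (hω : IsControl ω) {a b : ℝ} (ha : 0 ≤ a) (hab : a ≤ b) (hb : b ≤ 1) :
    0 ≤ ω a b :=
  hω.2.2.1 a b ha hab hb

lemma superadditive (hω : IsControl ω) {a b c : ℝ} (ha : 0 ≤ a) (hab : a ≤ b) (hbc : b ≤ c)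
    (hc : c ≤ 1) : ω a b + ω b c ≤ ω a c :=
  hω.2.2.2 a b c ha hab hbc hc

lemma mono (hω : IsControl ω) {a b c d : ℝ} (ha : 0 ≤ a) (hab : a ≤ b) (hbc : b ≤ c)
    (hcd : c ≤ d) (hd : d ≤ 1) : ω b c ≤ ω a d := by
  have := hω.superadditive ha hab hbc (hcd.trans hd)
  have := hω.superadditive ha (hab.trans hbc) hcd hd
  have := hω.nonneg ha hab ((hbc.trans hcd).trans hd)
  have := hω.nonneg (ha.trans (hab.trans hbc)) hcd hd
  linarith

lemma rpow_mono (hω : IsControl ω) {p a b c d : ℝ} (hp : 0 ≤ p) (ha : 0 ≤ a) (hab : a ≤ b)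
    (hbc : b ≤ c) (hcd : c ≤ d) (hd : d ≤ 1) : ω b c ^ p ≤ ω a d ^ p :=
  Real.rpow_le_rpow (hω.nonneg (ha.trans hab) hbc ((hcd.trans hd))) (hω.mono ha hab hbc hcd hd) hp

lemma rpow_two_mul_le (hω : IsControl ω) {p s t T : ℝ} (hp : 0 ≤ p) (hs : 0 ≤ s) (hst : s ≤ t)
    (htT : t ≤ T) (hT : T ≤ 1) : ω s t ^ (2 * p) ≤ ω 0 T ^ p * ω s t ^ p := by
  have hst' := hω.nonneg hs hst (htT.trans hT)
  rw [rpow_two_mul_eq_mul_self hst']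
  exact mul_le_mul_of_nonneg_right (hω.rpow_mono hp le_rfl hs hst htT hT) (by positivity)

lemma sum_skip_le (hω : IsControl ω) {u : ℕ → ℝ} {N : ℕ} (hu : MonotoneOn u (Set.Iic (N + 1)))
    (h0 : 0 ≤ u 0) (h1 : u (N + 1) ≤ 1) :
    ∑ j ∈ range N, ω (u j) (u (j + 2)) ≤ 2 * ω (u 0) (u (N + 1)) := by
  have hu' : ∀ i j, i ≤ j → j ≤ N + 1 → u i ≤ u j := fun i j hij hj =>
    hu (Set.mem_Iic.2 (hij.trans hj)) (Set.mem_Iic.2 hj) hij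
  suffices ∀ n ≤ N, ∑ j ∈ range n, ω (u j) (u (j + 2)) ≤ ω (u 0) (u n) + ω (u 0) (u (n + 1)) by
    have := this N le_rfl
    have := hω.mono h0 le_rfl (hu' 0 N (by omega) (by omega)) (hu' N (N + 1) (by omega) le_rfl) h1
    linarith
  intro n hn
  induction n with
  | zero =>
    have hu1 : u 1 ≤ 1 := (hu' 1 (N + 1) (by omega) le_rfl).trans h1
    rw [sum_range_zero]
    exact add_nonneg (hω.nonneg h0 le_rfl ((hu' 0 1 (by omega) (by omega)).trans hu1))
      (hω.nonneg h0 (hu' 0 1 (by omega) (by omega)) hu1)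
  | succ n ih =>
    have hn1 : u (n + 2) ≤ 1 := (hu' (n + 2) (N + 1) (by omega) le_rfl).trans h1
    have := hω.superadditive h0 (hu' 0 n (by omega) (by omega))
      (hu' n (n + 2) (by omega) (by omega)) hn1
    rw [sum_range_succ]
    linarith [ih (by omega)]

lemma exists_skip_le (hω : IsControl ω) {u : ℕ → ℝ} {N : ℕ} (hu : MonotoneOn u (Set.Iic (N + 2)))
    (h0 : 0 ≤ u 0) (h1 : u (N + 2) ≤ 1) :
    ∃ k < N + 1, ω (u k) (u (k + 2)) ≤ 2 * ω (u 0) (u (N + 2)) / (N + 1) := by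
  have hsum : ∑ j ∈ range (N + 1), ω (u j) (u (j + 2))
      ≤ ∑ _j ∈ range (N + 1), 2 * ω (u 0) (u (N + 2)) / (N + 1) := by
    rw [sum_const, card_range, nsmul_eq_mul]
    push_cast
    rw [mul_div_cancel₀ _ (by positivity)]
    exact hω.sum_skip_le hu h0 h1
  obtain ⟨k, hk, hle⟩ := exists_le_of_sum_le nonempty_range_add_one hsum
  exact ⟨k, mem_range.1 hk, hle⟩

end IsControl

section Sewing

variable {E : Type*} [NormedAddCommGroup E]

def riemannSum (Ξ : ℝ → ℝ → E) (u : ℕ → ℝ) (n : ℕ) : E :=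
  ∑ i ∈ range n, Ξ (u i) (u (i + 1))

/-- `u ∘ skipIndex k` is the sequence `u` with the point `u (k + 1)` removed. -/
def skipIndex (k i : ℕ) : ℕ := if i ≤ k then i else i + 1

lemma monotone_skipIndex (k : ℕ) : Monotone (skipIndex k) := by
  intro i j hij
  unfold skipIndex
  split_ifs <;> omega

lemma skipIndex_zero (k : ℕ) : skipIndex k 0 = 0 := by
  simp [skipIndex]

lemma skipIndex_of_lt {k i : ℕ} (h : k < i) : skipIndex k i = i + 1 :=
  if_neg (Nat.not_le.2 h)

lemma MonotoneOn.comp_skipIndex {u : ℕ → ℝ} {N : ℕ} (hu : MonotoneOn u (Set.Iic (N + 1)))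
    (k : ℕ) : MonotoneOn (u ∘ skipIndex k) (Set.Iic N) :=
  hu.comp ((monotone_skipIndex k).monotoneOn _) fun i hi => by
    simp only [Set.mem_Iic, skipIndex] at hi ⊢
    split_ifs <;> omega

lemma riemannSum_eq_riemannSum_skipIndex_sub (Ξ : ℝ → ℝ → E) (u : ℕ → ℝ) {N k : ℕ}
    (hk : k < N) :
    riemannSum Ξ u (N + 1) = riemannSum Ξ (u ∘ skipIndex k) N
      - (Ξ (u k) (u (k + 2)) - Ξ (u k) (u (k + 1)) - Ξ (u (k + 1)) (u (k + 2))) := by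
  obtain ⟨r, rfl⟩ : ∃ r, N = k + 1 + r := ⟨N - (k + 1), by omega⟩
  have hlow : ∀ i ∈ range k, Ξ (u (skipIndex k i)) (u (skipIndex k (i + 1)))
      = Ξ (u i) (u (i + 1)) := fun i hi => by
    have := mem_range.1 hi
    simp only [skipIndex, if_pos this.le, if_pos (Nat.succ_le_of_lt this)]
  have hhigh : ∀ i ∈ range r, Ξ (u (skipIndex k (k + 1 + i))) (u (skipIndex k (k + 1 + i + 1)))
      = Ξ (u (k + 1 + 1 + i)) (u (k + 1 + 1 + i + 1)) := fun i _ => by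
    rw [skipIndex_of_lt (by omega), skipIndex_of_lt (by omega),
      show k + 1 + i + 1 = k + 1 + 1 + i by omega]
  simp only [riemannSum, Function.comp_apply]
  rw [show k + 1 + r + 1 = k + 1 + 1 + r by omega, sum_range_add _ (k + 1 + 1) r,
    sum_range_add _ (k + 1) r, sum_range_succ, sum_range_succ, sum_range_succ,
    sum_congr rfl hlow, sum_congr rfl hhigh, skipIndex_of_lt (Nat.lt_succ_self k)]
  simp only [skipIndex, le_refl, if_true]
  abel

variable {ω : ℝ → ℝ → ℝ}

lemma norm_riemannSum_sub_le (hω : IsControl ω) (Ξ : ℝ → ℝ → E) {s t θ M : ℝ}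
    (hs : 0 ≤ s) (ht : t ≤ 1) (hθ : 0 ≤ θ) (hM : 0 ≤ M)
    (hδ : ∀ a b c, s ≤ a → a ≤ b → b ≤ c → c ≤ t →
      ‖Ξ a c - Ξ a b - Ξ b c‖ ≤ M * ω a c ^ θ) :
    ∀ (N : ℕ) (u : ℕ → ℝ), MonotoneOn u (Set.Iic (N + 1)) → u 0 = s → u (N + 1) = t →
      ‖riemannSum Ξ u (N + 1) - Ξ s t‖ ≤ M * ∑ k ∈ range N, (2 * ω s t / (k + 1)) ^ θ := by
  intro N
  induction N with
  | zero =>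
    intro u _ h0 h1
    simp [riemannSum, h0, h1]
  | succ N ih =>
    intro u hu h0 h1
    have hu' : ∀ i j, i ≤ j → j ≤ N + 2 → u i ≤ u j := fun i j hij hj =>
      hu (Set.mem_Iic.2 (hij.trans hj)) (Set.mem_Iic.2 hj) hij
    obtain ⟨k, hk, hkω⟩ := hω.exists_skip_le hu (h0 ▸ hs) (h1 ▸ ht)
    rw [h0, h1] at hkω
    have hsk : s ≤ u k := h0 ▸ hu' 0 k (by omega) (by omega)
    have hkt : u (k + 2) ≤ t := h1 ▸ hu' (k + 2) (N + 2) (by omega) le_rfl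
    have hremoved : ‖Ξ (u k) (u (k + 2)) - Ξ (u k) (u (k + 1)) - Ξ (u (k + 1)) (u (k + 2))‖
        ≤ M * (2 * ω s t / (N + 1)) ^ θ := by
      refine (hδ _ _ _ hsk (hu' k (k + 1) (by omega) (by omega))
        (hu' (k + 1) (k + 2) (by omega) (by omega)) hkt).trans ?_
      have := hω.nonneg (hs.trans hsk) (hu' k (k + 2) (by omega) (by omega)) (hkt.trans ht)
      gcongr
    have hskipped := ih (u ∘ skipIndex k) (hu.comp_skipIndex k)
      (by simp [skipIndex_zero, h0]) (by simp [skipIndex_of_lt hk, h1])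
    calc ‖riemannSum Ξ u (N + 1 + 1) - Ξ s t‖
        ≤ ‖riemannSum Ξ (u ∘ skipIndex k) (N + 1) - Ξ s t‖
          + ‖Ξ (u k) (u (k + 2)) - Ξ (u k) (u (k + 1)) - Ξ (u (k + 1)) (u (k + 2))‖ := by
          rw [riemannSum_eq_riemannSum_skipIndex_sub Ξ u hk, sub_right_comm]
          exact norm_sub_le _ _
      _ ≤ M * ∑ j ∈ range N, (2 * ω s t / (j + 1)) ^ θ + M * (2 * ω s t / (N + 1)) ^ θ :=
          add_le_add hskipped hremoved
      _ = M * ∑ j ∈ range (N + 1), (2 * ω s t / (j + 1)) ^ θ := by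
          rw [sum_range_succ, mul_add]

end Sewing

lemma summable_nat_add_one_rpow_neg {θ : ℝ} (hθ : 1 < θ) :
    Summable fun n : ℕ => ((n : ℝ) + 1) ^ (-θ) := by
  have := (summable_nat_add_iff 1).2 (Real.summable_nat_rpow.2 (by linarith : -θ < -1))
  simpa only [Nat.cast_add, Nat.cast_one] using this

lemma zetaR_nonneg (θ : ℝ) : 0 ≤ zetaR θ :=
  tsum_nonneg fun _ => by positivity

noncomputable def sewingConstant (θ : ℝ) : ℝ :=
  2 ^ θ * zetaR θ

lemma sewingConstant_nonneg (θ : ℝ) : 0 ≤ sewingConstant θ :=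
  mul_nonneg (by positivity) (zetaR_nonneg θ)

lemma sum_range_rpow_two_mul_div_le {θ x : ℝ} (hθ : 1 < θ) (hx : 0 ≤ x) (N : ℕ) :
    ∑ k ∈ range N, (2 * x / (k + 1)) ^ θ ≤ sewingConstant θ * x ^ θ := by
  have hterm : ∀ k : ℕ, (2 * x / (k + 1)) ^ θ = 2 ^ θ * x ^ θ * ((k : ℝ) + 1) ^ (-θ) := by
    intro k
    rw [Real.div_rpow (by positivity) (by positivity), Real.mul_rpow zero_le_two hx,
      Real.rpow_neg (by positivity), div_eq_mul_inv]
  simp_rw [hterm, ← mul_sum]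
  rw [sewingConstant, mul_right_comm]
  gcongr
  exact (summable_nat_add_one_rpow_neg hθ).sum_le_tsum _ fun _ _ => by positivity

namespace Subdivision

variable {r s t : ℝ}

lemma mesh_lt_iff (P : Subdivision s t) {δ : ℝ} :
    P.mesh < δ ↔ ∀ i < P.N, P.pt (i + 1) - P.pt i < δ := by
  simp [mesh, Finset.sup'_lt_iff]

lemma monotoneOn (P : Subdivision s t) : MonotoneOn P.pt (Set.Iic P.N) :=
  monotoneOn_Iic_of_le_succ P.mono

noncomputable def uniform (hst : s ≤ t) (n : ℕ) : Subdivision s t where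
  N := n + 1
  pt i := s + (t - s) * i / (n + 1)
  pos := n.succ_pos
  first := by simp
  last := by push_cast; field_simp; ring
  mono i _ := by
    have : 0 ≤ t - s := sub_nonneg.2 hst
    gcongr
    simp

lemma exists_mesh_lt (hst : s ≤ t) {δ : ℝ} (hδ : 0 < δ) : ∃ P : Subdivision s t, P.mesh < δ := by
  obtain ⟨n, hn⟩ := exists_nat_gt ((t - s) / δ)
  refine ⟨uniform hst n, (mesh_lt_iff _).2 fun i _ => ?_⟩
  have hstep : (uniform hst n).pt (i + 1) - (uniform hst n).pt i = (t - s) / (n + 1) := by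
    simp only [uniform]; push_cast; field_simp; ring
  rw [hstep, div_lt_iff₀ (by positivity)]
  rw [div_lt_iff₀ hδ] at hn
  nlinarith

def append (Q : Subdivision r s) (P : Subdivision s t) : Subdivision r t where
  N := Q.N + P.N
  pt i := if i < Q.N then Q.pt i else P.pt (i - Q.N)
  pos := by have := Q.pos; omega
  first := by simp [Q.pos, Q.first]
  last := by simp [P.last]
  mono i hi := by
    rcases lt_trichotomy (i + 1) Q.N with h | h | h
    · simp only [if_pos h, if_pos (by omega : i < Q.N)]
      exact Q.mono i (by omega)
    · have hle := Q.mono i (by omega)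
      rw [h, Q.last] at hle
      simpa only [if_pos (by omega : i < Q.N), h, lt_irrefl, if_false, Nat.sub_self, P.first]
    · simp only [if_neg (by omega : ¬ i < Q.N), if_neg (by omega : ¬ i + 1 < Q.N),
        show i + 1 - Q.N = i - Q.N + 1 by omega]
      exact P.mono _ (by omega)

lemma append_pt_of_le (Q : Subdivision r s) (P : Subdivision s t) {i : ℕ} (hi : i ≤ Q.N) :
    (Q.append P).pt i = Q.pt i := by
  rcases hi.lt_or_eq with h | rfl
  · simp [append, h]
  · simp [append, P.first, Q.last]

lemma append_pt_add (Q : Subdivision r s) (P : Subdivision s t) (j : ℕ) :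
    (Q.append P).pt (Q.N + j) = P.pt j := by
  simp [append]

lemma mesh_append_lt (Q : Subdivision r s) (P : Subdivision s t) {δ : ℝ} (hQ : Q.mesh < δ)
    (hP : P.mesh < δ) : (Q.append P).mesh < δ := by
  rw [mesh_lt_iff] at hQ hP ⊢
  intro i hi
  rcases Nat.lt_or_ge i Q.N with h | h
  · rw [append_pt_of_le Q P h, append_pt_of_le Q P (by omega)]
    exact hQ i h
  · obtain ⟨j, rfl⟩ := Nat.exists_eq_add_of_le h
    rw [add_assoc, append_pt_add, append_pt_add]
    exact hP j (by simpa [append] using hi)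

lemma riemannSum_append {E : Type*} [NormedAddCommGroup E] (Ξ : ℝ → ℝ → E)
    (Q : Subdivision r s) (P : Subdivision s t) :
    riemannSum Ξ (Q.append P).pt (Q.append P).N
      = riemannSum Ξ Q.pt Q.N + riemannSum Ξ P.pt P.N := by
  rw [riemannSum, show (Q.append P).N = Q.N + P.N from rfl, sum_range_add]
  congr 1
  · refine sum_congr rfl fun i hi => ?_
    rw [append_pt_of_le Q P (mem_range.1 hi).le, append_pt_of_le Q P (mem_range.1 hi)]
  · exact sum_congr rfl fun j _ => by rw [add_assoc, append_pt_add, append_pt_add]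

end Subdivision

section GermLimit

variable {E : Type*} [NormedAddCommGroup E] {r s t : ℝ}

def GermLimit (Ξ : ℝ → ℝ → E) (s t : ℝ) (L : E) : Prop :=
  ∀ ε > (0 : ℝ), ∃ δ > (0 : ℝ), ∀ P : Subdivision s t, P.mesh < δ →
    ‖riemannSum Ξ P.pt P.N - L‖ ≤ ε

lemma GermLimit.sub {Ξ Ξ' : ℝ → ℝ → E} {L L' : E} (h : GermLimit Ξ s t L)
    (h' : GermLimit Ξ' s t L') : GermLimit (fun a b => Ξ a b - Ξ' a b) s t (L - L') := by
  intro ε hε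
  obtain ⟨δ, hδ, hP⟩ := h (ε / 2) (by positivity)
  obtain ⟨δ', hδ', hP'⟩ := h' (ε / 2) (by positivity)
  refine ⟨min δ δ', lt_min hδ hδ', fun P hmesh => ?_⟩
  have hsum : riemannSum (fun a b => Ξ a b - Ξ' a b) P.pt P.N - (L - L')
      = (riemannSum Ξ P.pt P.N - L) - (riemannSum Ξ' P.pt P.N - L') := by
    simp only [riemannSum, sum_sub_distrib]
    abel
  rw [hsum]
  calc _ ≤ ε / 2 + ε / 2 := (norm_sub_le _ _).trans (add_le_add
          (hP P (hmesh.trans_le (min_le_left _ _))) (hP' P (hmesh.trans_le (min_le_right _ _))))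
    _ = ε := add_halves ε

/-- Prefixing a fine partition of `[r, s]` turns Riemann sums over `[s, t]` into differences of
Riemann sums over `[r, t]` and `[r, s]`. -/
lemma GermLimit.sub_of_le {Ξ : ℝ → ℝ → E} {Ls Lt : E} (hrs : r ≤ s) (hs : GermLimit Ξ r s Ls)
    (ht : GermLimit Ξ r t Lt) : GermLimit Ξ s t (Lt - Ls) := by
  intro ε hε
  obtain ⟨δ, hδ, hPt⟩ := ht (ε / 2) (by positivity)
  obtain ⟨δ', hδ', hPs⟩ := hs (ε / 2) (by positivity)
  obtain ⟨Q, hQ⟩ := Subdivision.exists_mesh_lt hrs (lt_min hδ hδ')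
  refine ⟨δ, hδ, fun P hP => ?_⟩
  have hQP := hPt (Q.append P) (Q.mesh_append_lt P (hQ.trans_le (min_le_left _ _)) hP)
  rw [Subdivision.riemannSum_append] at hQP
  calc ‖riemannSum Ξ P.pt P.N - (Lt - Ls)‖
      = ‖(riemannSum Ξ Q.pt Q.N + riemannSum Ξ P.pt P.N - Lt) - (riemannSum Ξ Q.pt Q.N - Ls)‖ := by
        congr 1; abel
    _ ≤ ε / 2 + ε / 2 :=
        (norm_sub_le _ _).trans (add_le_add hQP (hPs Q (hQ.trans_le (min_le_right _ _))))
    _ = ε := add_halves ε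

lemma GermLimit.norm_sub_le {ω : ℝ → ℝ → ℝ} (hω : IsControl ω) {Ξ : ℝ → ℝ → E} {L : E}
    {θ M : ℝ} (h : GermLimit Ξ s t L) (hs : 0 ≤ s) (hst : s ≤ t) (ht : t ≤ 1) (hθ : 1 < θ)
    (hM : 0 ≤ M)
    (hδ : ∀ a b c, s ≤ a → a ≤ b → b ≤ c → c ≤ t → ‖Ξ a c - Ξ a b - Ξ b c‖ ≤ M * ω a c ^ θ) :
    ‖L - Ξ s t‖ ≤ M * sewingConstant θ * ω s t ^ θ := by
  refine le_of_forall_pos_le_add fun ε hε => ?_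
  obtain ⟨δ, hδ0, hP⟩ := h ε hε
  obtain ⟨P, hPδ⟩ := Subdivision.exists_mesh_lt hst hδ0
  have hsewing : ‖riemannSum Ξ P.pt P.N - Ξ s t‖ ≤ M * sewingConstant θ * ω s t ^ θ := by
    obtain ⟨N, hN⟩ : ∃ N, P.N = N + 1 := ⟨P.N - 1, by have := P.pos; omega⟩
    have hmono : MonotoneOn P.pt (Set.Iic (N + 1)) := hN ▸ P.monotoneOn
    have hlast : P.pt (N + 1) = t := hN ▸ P.last
    rw [hN, mul_assoc]
    refine (norm_riemannSum_sub_le hω Ξ hs ht (by linarith) hM hδ N P.pt hmono P.first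
      hlast).trans ?_
    gcongr
    exact sum_range_rpow_two_mul_div_le hθ (hω.nonneg hs hst ht) N
  calc ‖L - Ξ s t‖ ≤ ‖L - riemannSum Ξ P.pt P.N‖ + ‖riemannSum Ξ P.pt P.N - Ξ s t‖ :=
        norm_sub_le_norm_sub_add_norm_sub _ _ _
    _ ≤ _ := by rw [norm_sub_rev]; linarith [hP P hPδ]

end GermLimit

section Controlled

variable {E : Type*} [NormedAddCommGroup E] {ω : ℝ → ℝ → ℝ} {p T C : ℝ}

def ControlledBy (ω : ℝ → ℝ → ℝ) (p T C : ℝ) (X : ℝ → E) : Prop :=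
  ∀ s t, 0 ≤ s → s ≤ t → t ≤ T → ‖X t - X s‖ ≤ C * ω s t ^ p

lemma ControlledBy.congr_const {C' : ℝ} {X : ℝ → E} (h : ControlledBy ω p T C X) (hC : C = C') :
    ControlledBy ω p T C' X :=
  hC ▸ h

lemma ControlledBy.norm_le (hω : IsControl ω) {X : ℝ → E} (h : ControlledBy ω p T C X)
    (hp : 0 ≤ p) (hC : 0 ≤ C) (hT : T ≤ 1) (h0 : X 0 = 0) {a : ℝ} (ha : 0 ≤ a) (haT : a ≤ T) :
    ‖X a‖ ≤ C * ω 0 T ^ p := by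
  have := h 0 a le_rfl ha haT
  rw [h0, sub_zero] at this
  exact this.trans (mul_le_mul_of_nonneg_left (hω.rpow_mono hp le_rfl le_rfl ha haT hT) hC)

lemma controlledBy_of_germLimit (hω : IsControl ω) {M N : ℝ} (hp : 1 < 2 * p) (hT : T ≤ 1)
    (hM : 0 ≤ M) {Ξ : ℝ → ℝ → E} {J : ℝ → E}
    (hJ : ∀ s t, 0 ≤ s → s ≤ t → t ≤ T → GermLimit Ξ s t (J t - J s))
    (hδ : ∀ a b c, 0 ≤ a → a ≤ b → b ≤ c → c ≤ T →
      ‖Ξ a c - Ξ a b - Ξ b c‖ ≤ M * ω a c ^ (2 * p))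
    (hΞ : ∀ s t, 0 ≤ s → s ≤ t → t ≤ T → ‖Ξ s t‖ ≤ N * ω s t ^ p) :
    ControlledBy ω p T (N + M * sewingConstant (2 * p) * ω 0 T ^ p) J := by
  intro s t hs hst htT
  have hsewing := (hJ s t hs hst htT).norm_sub_le hω hs hst (htT.trans hT) hp hM
    fun a b c hsa hab hbc hct => hδ a b c (hs.trans hsa) hab hbc (hct.trans htT)
  have hpow := hω.rpow_two_mul_le (by linarith : 0 ≤ p) hs hst htT hT
  calc ‖J t - J s‖ ≤ ‖Ξ s t‖ + ‖J t - J s - Ξ s t‖ := norm_le_insert' _ _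
    _ ≤ N * ω s t ^ p + M * sewingConstant (2 * p) * (ω 0 T ^ p * ω s t ^ p) := by
        gcongr
        · exact hΞ s t hs hst htT
        · exact hsewing.trans
            (mul_le_mul_of_nonneg_left hpow (mul_nonneg hM (sewingConstant_nonneg _)))
    _ = _ := by ring

end Controlled

section YoungIntegral

variable {V : Type*} [NormedAddCommGroup V] [NormedSpace ℝ V] {ω : ℝ → ℝ → ℝ} {p T : ℝ}

def youngGerm (X Y : ℝ → V →L[ℝ] V) (a b : ℝ) : V →L[ℝ] V :=
  (X b - X a).comp (Y a)

lemma germLimit_youngGerm_iff {X Y : ℝ → V →L[ℝ] V} {s t : ℝ} {L : V →L[ℝ] V} :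
    GermLimit (youngGerm X Y) s t L ↔ RSLimit X Y s t L :=
  Iff.rfl

lemma youngGerm_delta (X Y : ℝ → V →L[ℝ] V) (a b c : ℝ) :
    youngGerm X Y a c - youngGerm X Y a b - youngGerm X Y b c = (X c - X b).comp (Y a - Y b) := by
  simp only [youngGerm, ContinuousLinearMap.sub_comp, ContinuousLinearMap.comp_sub]
  abel

lemma youngGerm_sub_youngGerm (X X' Y Y' : ℝ → V →L[ℝ] V) (a b : ℝ) :
    youngGerm X Y a b - youngGerm X' Y' a b
      = youngGerm (X - X') Y a b + youngGerm X' (Y - Y') a b := by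
  simp only [youngGerm, Pi.sub_apply, ContinuousLinearMap.sub_comp, ContinuousLinearMap.comp_sub]
  abel

lemma norm_youngGerm_delta_le (hω : IsControl ω) (hp : 0 ≤ p) (hT : T ≤ 1)
    {X Y : ℝ → V →L[ℝ] V} {α C : ℝ} (hα : 0 ≤ α) (hC : 0 ≤ C) (hX : ControlledBy ω p T α X)
    (hY : ControlledBy ω p T C Y) {a b c : ℝ} (ha : 0 ≤ a) (hab : a ≤ b) (hbc : b ≤ c)
    (hcT : c ≤ T) :
    ‖youngGerm X Y a c - youngGerm X Y a b - youngGerm X Y b c‖ ≤ α * C * ω a c ^ (2 * p) := by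
  have hc := hcT.trans hT
  rw [youngGerm_delta, rpow_two_mul_eq_mul_self (hω.nonneg ha (hab.trans hbc) hc)]
  calc _ ≤ ‖X c - X b‖ * ‖Y b - Y a‖ := by
        rw [norm_sub_rev (Y b)]; exact ContinuousLinearMap.opNorm_comp_le _ _
    _ ≤ (α * ω b c ^ p) * (C * ω a b ^ p) :=
        mul_le_mul (hX b c (ha.trans hab) hbc hcT) (hY a b ha hab (hbc.trans hcT))
          (norm_nonneg _) (by have := hω.nonneg (ha.trans hab) hbc hc; positivity)
    _ ≤ (α * ω a c ^ p) * (C * ω a c ^ p) := by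
        have := hω.nonneg ha hab (hbc.trans hc)
        have := hω.nonneg ha (hab.trans hbc) hc
        exact mul_le_mul (mul_le_mul_of_nonneg_left (hω.rpow_mono hp ha hab hbc le_rfl hc) hα)
          (mul_le_mul_of_nonneg_left (hω.rpow_mono hp ha le_rfl hab hbc hc) hC)
          (by positivity) (by positivity)
    _ = α * C * (ω a c ^ p * ω a c ^ p) := by ring

lemma norm_youngGerm_le (hω : IsControl ω) (hT : T ≤ 1) {X Y : ℝ → V →L[ℝ] V} {α B : ℝ}
    (hα : 0 ≤ α) (hX : ControlledBy ω p T α X) (hYB : ∀ a, 0 ≤ a → a ≤ T → ‖Y a‖ ≤ B)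
    {s t : ℝ} (hs : 0 ≤ s) (hst : s ≤ t) (htT : t ≤ T) :
    ‖youngGerm X Y s t‖ ≤ α * B * ω s t ^ p := by
  have := hω.nonneg hs hst (htT.trans hT)
  calc _ ≤ ‖X t - X s‖ * ‖Y s‖ := ContinuousLinearMap.opNorm_comp_le _ _
    _ ≤ (α * ω s t ^ p) * B :=
        mul_le_mul (hX s t hs hst htT) (hYB s hs (hst.trans htT)) (norm_nonneg _) (by positivity)
    _ = α * B * ω s t ^ p := by ring

lemma controlledBy_integral (hω : IsControl ω) (hp : 1 < 2 * p) (hT : T ≤ 1)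
    {Ω G J : ℝ → V →L[ℝ] V} {α C B : ℝ} (hα : 0 ≤ α) (hC : 0 ≤ C)
    (hΩ : ControlledBy ω p T α Ω) (hG : ControlledBy ω p T C G)
    (hGB : ∀ a, 0 ≤ a → a ≤ T → ‖G a‖ ≤ B) (hJ : ∀ r, 0 ≤ r → r ≤ T → RSLimit Ω G 0 r (J r)) :
    ControlledBy ω p T (α * B + α * C * sewingConstant (2 * p) * ω 0 T ^ p) J :=
  controlledBy_of_germLimit hω hp hT (mul_nonneg hα hC)
    (fun s t hs hst htT => GermLimit.sub_of_le hs
      (germLimit_youngGerm_iff.2 (hJ s hs (hst.trans htT)))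
      (germLimit_youngGerm_iff.2 (hJ t (hs.trans hst) htT)))
    (fun _ _ _ ha hab hbc hcT =>
      norm_youngGerm_delta_le hω (by linarith) hT hα hC hΩ hG ha hab hbc hcT)
    (fun _ _ hs hst htT => norm_youngGerm_le hω hT hα hΩ hGB hs hst htT)

lemma controlledBy_integral_sub (hω : IsControl ω) (hp : 1 < 2 * p) (hT : T ≤ 1)
    {Ω Ωh G Gh J Jh : ℝ → V →L[ℝ] V} {ε β C B D B' : ℝ} (hε : 0 ≤ ε) (hβ : 0 ≤ β) (hC : 0 ≤ C)
    (hD : 0 ≤ D) (hΩΩh : ControlledBy ω p T ε (Ω - Ωh)) (hΩh : ControlledBy ω p T β Ωh)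
    (hG : ControlledBy ω p T C G) (hGB : ∀ a, 0 ≤ a → a ≤ T → ‖G a‖ ≤ B)
    (hGGh : ControlledBy ω p T D (G - Gh)) (hGGhB : ∀ a, 0 ≤ a → a ≤ T → ‖G a - Gh a‖ ≤ B')
    (hJ : ∀ r, 0 ≤ r → r ≤ T → RSLimit Ω G 0 r (J r))
    (hJh : ∀ r, 0 ≤ r → r ≤ T → RSLimit Ωh Gh 0 r (Jh r)) :
    ControlledBy ω p T
      (ε * B + β * B' + (ε * C + β * D) * sewingConstant (2 * p) * ω 0 T ^ p) (J - Jh) := by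
  have hp0 : 0 ≤ p := by linarith
  refine controlledBy_of_germLimit (Ξ := fun a b => youngGerm Ω G a b - youngGerm Ωh Gh a b)
    hω hp hT (by positivity) (fun s t hs hst htT => ?_) (fun a b c ha hab hbc hcT => ?_)
    (fun s t hs hst htT => ?_)
  · have hlim (X Y K : ℝ → V →L[ℝ] V) (hK : ∀ r, 0 ≤ r → r ≤ T → RSLimit X Y 0 r (K r)) :
        GermLimit (youngGerm X Y) s t (K t - K s) :=
      GermLimit.sub_of_le hs (germLimit_youngGerm_iff.2 (hK s hs (hst.trans htT)))
        (germLimit_youngGerm_iff.2 (hK t (hs.trans hst) htT))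
    simpa only [Pi.sub_apply, sub_sub_sub_comm] using (hlim Ω G J hJ).sub (hlim Ωh Gh Jh hJh)
  · simp only [youngGerm_sub_youngGerm]
    rw [show ∀ x y z x' y' z' : V →L[ℝ] V,
      x + x' - (y + y') - (z + z') = (x - y - z) + (x' - y' - z') by intros; abel]
    calc _ ≤ _ := norm_add_le _ _
      _ ≤ ε * C * ω a c ^ (2 * p) + β * D * ω a c ^ (2 * p) :=
          add_le_add (norm_youngGerm_delta_le hω hp0 hT hε hC hΩΩh hG ha hab hbc hcT)
            (norm_youngGerm_delta_le hω hp0 hT hβ hD hΩh hGGh ha hab hbc hcT)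
      _ = _ := by ring
  · rw [youngGerm_sub_youngGerm]
    calc _ ≤ _ := norm_add_le _ _
      _ ≤ ε * B * ω s t ^ p + β * B' * ω s t ^ p :=
          add_le_add (norm_youngGerm_le hω hT hε hΩΩh hGB hs hst htT)
            (norm_youngGerm_le hω hT hβ hΩh hGGhB hs hst htT)
      _ = _ := by ring

end YoungIntegral

section IteratedIntegrals

variable {V : Type*} [NormedAddCommGroup V] [NormedSpace ℝ V] {ω : ℝ → ℝ → ℝ} {p T ε : ℝ}
  {Ω Ωh : ℝ → V →L[ℝ] V} {I Ih : ℕ → ℝ → V →L[ℝ] V}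

lemma IsIteratedIntegrals.controlledBy_step (hω : IsControl ω) (hp : 1 < 2 * p) (hT : T ≤ 1)
    (hε : 0 ≤ ε) (hΩ : ControlledBy ω p T 1 Ω) (hΩh : ControlledBy ω p T 1 Ωh)
    (hΩΩh : ControlledBy ω p T ε (Ω - Ωh)) (hI : IsIteratedIntegrals Ω T I)
    (hIh : IsIteratedIntegrals Ωh T Ih) {m : ℕ} {C B D B' : ℝ} (hC : 0 ≤ C) (hD : 0 ≤ D)
    (hIm : ControlledBy ω p T C (I m)) (hIhm : ControlledBy ω p T C (Ih m))
    (hdm : ControlledBy ω p T D (I m - Ih m)) (hImB : ∀ a, 0 ≤ a → a ≤ T → ‖I m a‖ ≤ B)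
    (hIhmB : ∀ a, 0 ≤ a → a ≤ T → ‖Ih m a‖ ≤ B)
    (hdmB : ∀ a, 0 ≤ a → a ≤ T → ‖I m a - Ih m a‖ ≤ B') :
    ControlledBy ω p T (B + C * sewingConstant (2 * p) * ω 0 T ^ p) (I (m + 1)) ∧
      ControlledBy ω p T (B + C * sewingConstant (2 * p) * ω 0 T ^ p) (Ih (m + 1)) ∧
      ControlledBy ω p T (ε * B + B' + (ε * C + D) * sewingConstant (2 * p) * ω 0 T ^ p)
        (I (m + 1) - Ih (m + 1)) :=
  ⟨(controlledBy_integral hω hp hT zero_le_one hC hΩ hIm hImB (hI.2.2 m)).congr_const (by ring),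
    (controlledBy_integral hω hp hT zero_le_one hC hΩh hIhm hIhmB (hIh.2.2 m)).congr_const
      (by ring),
    (controlledBy_integral_sub hω hp hT hε zero_le_one hC hD hΩΩh hΩh hIm hImB hdm hdmB
      (hI.2.2 m) (hIh.2.2 m)).congr_const (by ring)⟩

noncomputable def youngConstant (ω : ℝ → ℝ → ℝ) (p T : ℝ) : ℝ :=
  ω 0 T ^ p * (1 + sewingConstant (2 * p))

lemma IsIteratedIntegrals.controlledBy_succ (hω : IsControl ω) (hp : 1 < 2 * p) (hT0 : 0 ≤ T)
    (hT : T ≤ 1) (hε : 0 ≤ ε) (hΩ : ControlledBy ω p T 1 Ω) (hΩh : ControlledBy ω p T 1 Ωh)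
    (hΩΩh : ControlledBy ω p T ε (Ω - Ωh)) (hI : IsIteratedIntegrals Ω T I)
    (hIh : IsIteratedIntegrals Ωh T Ih) (m : ℕ) :
    ControlledBy ω p T (youngConstant ω p T ^ m) (I (m + 1)) ∧
      ControlledBy ω p T (youngConstant ω p T ^ m) (Ih (m + 1)) ∧
      ControlledBy ω p T (ε * (m + 1) * youngConstant ω p T ^ m) (I (m + 1) - Ih (m + 1)) := by
  have hp0 : 0 ≤ p := by linarith
  have hK : 0 ≤ youngConstant ω p T := mul_nonneg (Real.rpow_nonneg (hω.nonneg le_rfl hT0 hT) p)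
    (by linarith [sewingConstant_nonneg (2 * p)])
  induction m with
  | zero =>
    have hI0 : ControlledBy ω p T 0 (I 0) := fun s t _ _ _ => by simp [hI.1]
    have hIh0 : ControlledBy ω p T 0 (Ih 0) := fun s t _ _ _ => by simp [hIh.1]
    have hd0 : ControlledBy ω p T 0 (I 0 - Ih 0) := fun s t _ _ _ => by simp [hI.1, hIh.1]
    obtain ⟨h1, h2, h3⟩ := hI.controlledBy_step (B := 1) (B' := 0) hω hp hT hε hΩ hΩh hΩΩh hIh
      le_rfl le_rfl hI0 hIh0 hd0
      (fun _ _ _ => by rw [hI.1]; exact ContinuousLinearMap.norm_id_le)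
      (fun _ _ _ => by rw [hIh.1]; exact ContinuousLinearMap.norm_id_le)
      (fun _ _ _ => by simp [hI.1, hIh.1])
    exact ⟨h1.congr_const (by ring), h2.congr_const (by ring),
      h3.congr_const (by push_cast; ring)⟩
  | succ m ih =>
    obtain ⟨hIm, hIhm, hdm⟩ := ih
    have hε' : 0 ≤ ε * (m + 1) * youngConstant ω p T ^ m := by positivity
    obtain ⟨h1, h2, h3⟩ := hI.controlledBy_step hω hp hT hε hΩ hΩh hΩΩh hIh
      (pow_nonneg hK m) hε' hIm hIhm hdm
      (fun a ha haT => hIm.norm_le hω hp0 (pow_nonneg hK m) hT (hI.2.1 m) ha haT)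
      (fun a ha haT => hIhm.norm_le hω hp0 (pow_nonneg hK m) hT (hIh.2.1 m) ha haT)
      (fun a ha haT => hdm.norm_le hω hp0 hε' hT (by simp [hI.2.1 m, hIh.2.1 m]) ha haT)
    exact ⟨h1.congr_const (by rw [youngConstant]; ring),
      h2.congr_const (by rw [youngConstant]; ring),
      h3.congr_const (by rw [youngConstant]; push_cast; ring)⟩

end IteratedIntegrals

theorem statement5_general (q T ε : ℝ) (hq1 : 1 ≤ q) (hq2 : q < 2) (hT1 : T ≤ 1)
    (hε : 0 ≤ ε)
    (V : Type u) [NormedAddCommGroup V] [NormedSpace ℝ V]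
    (ω : ℝ → ℝ → ℝ) (hω : IsControl ω)
    (Ω Ωh : ℝ → V →L[ℝ] V)
    (hΩ : ∀ s t, 0 ≤ s → s ≤ t → t ≤ 1 → ‖Ω t - Ω s‖ ≤ ω s t ^ (1 / q))
    (hΩh : ∀ s t, 0 ≤ s → s ≤ t → t ≤ 1 → ‖Ωh t - Ωh s‖ ≤ ω s t ^ (1 / q))
    (hdiff : ∀ s t, 0 ≤ s → s ≤ t → t ≤ 1 →
      ‖(Ω t - Ω s) - (Ωh t - Ωh s)‖ ≤ ε * ω s t ^ (1 / q))
    (I Ih : ℕ → ℝ → V →L[ℝ] V)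
    (hI : IsIteratedIntegrals Ω T I) (hIh : IsIteratedIntegrals Ωh T Ih) :
    ∀ n : ℕ, 1 ≤ n → ∀ s t, 0 ≤ s → s ≤ t → t ≤ T →
      ‖(I n t - I n s) - (Ih n t - Ih n s)‖
        ≤ ε * n * (ω 0 T ^ (1 / q) * (1 + 2 ^ ((2 : ℝ) / q) * zetaR (2 / q))) ^ (n - 1)
          * ω s t ^ (1 / q) := by
  intro n hn s t hs hst htT
  obtain ⟨m, rfl⟩ := Nat.exists_eq_add_of_le' hn
  have hp : 1 < 2 * (1 / q) := by rw [mul_one_div, one_lt_div (by linarith)]; exact hq2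
  have hcontrolled {X : ℝ → V →L[ℝ] V} {c : ℝ}
      (hX : ∀ s t, 0 ≤ s → s ≤ t → t ≤ 1 → ‖X t - X s‖ ≤ c * ω s t ^ (1 / q)) :
      ControlledBy ω (1 / q) T c X :=
    fun s t hs hst htT => hX s t hs hst (htT.trans hT1)
  have hΩΩh : ControlledBy ω (1 / q) T ε (Ω - Ωh) :=
    hcontrolled fun s t hs hst ht => by
      simpa only [Pi.sub_apply, sub_sub_sub_comm] using hdiff s t hs hst ht
  have hincrement := (hI.controlledBy_succ hω hp (hs.trans (hst.trans htT)) hT1 hε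
    (hcontrolled (by simpa only [one_mul] using hΩ))
    (hcontrolled (by simpa only [one_mul] using hΩh))
    hΩΩh hIh m).2.2 s t hs hst htT
  simpa only [youngConstant, sewingConstant, Pi.sub_apply, sub_sub_sub_comm, mul_one_div,
    Nat.add_sub_cancel, Nat.cast_add, Nat.cast_one] using hincrement

/-- If `Ω` and `Ω̂` are `ε`-close in the controlled sense, their iterated
Young integrals satisfy `‖(I^n_t − I^n_s) − (Î^n_t − Î^n_s)‖ ≤ ε n K^{n−1} ω(s,t)^{1/q}`. -/
theorem statement5 (q T ε : ℝ) (hq1 : 1 ≤ q) (hq2 : q < 2) (hT0 : 0 < T) (hT1 : T ≤ 1)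
    (hε : 0 ≤ ε)
    (V : Type u) [NormedAddCommGroup V] [NormedSpace ℝ V] [CompleteSpace V]
    (ω : ℝ → ℝ → ℝ) (hω : IsControl ω)
    (Ω Ωh : ℝ → V →L[ℝ] V)
    (hΩ : ∀ s t, 0 ≤ s → s ≤ t → t ≤ 1 → ‖Ω t - Ω s‖ ≤ ω s t ^ (1 / q))
    (hΩh : ∀ s t, 0 ≤ s → s ≤ t → t ≤ 1 → ‖Ωh t - Ωh s‖ ≤ ω s t ^ (1 / q))
    (hdiff : ∀ s t, 0 ≤ s → s ≤ t → t ≤ 1 →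
      ‖(Ω t - Ω s) - (Ωh t - Ωh s)‖ ≤ ε * ω s t ^ (1 / q))
    (I Ih : ℕ → ℝ → V →L[ℝ] V)
    (hI : IsIteratedIntegrals Ω T I) (hIh : IsIteratedIntegrals Ωh T Ih) :
    ∀ n : ℕ, 1 ≤ n → ∀ s t, 0 ≤ s → s ≤ t → t ≤ T →
      ‖(I n t - I n s) - (Ih n t - Ih n s)‖
        ≤ ε * n * (ω 0 T ^ (1 / q) * (1 + 2 ^ ((2 : ℝ) / q) * zetaR (2 / q))) ^ (n - 1)
          * ω s t ^ (1 / q) :=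
  statement5_general q T ε hq1 hq2 hT1 hε V ω hω Ω Ωh hΩ hΩh hdiff I Ih hI hIh
end
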